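/- arXiv:math/0601177 — 8 statements merged into one kernel-verified Lean document; each statement's English description precedes it below -/
import Mathlib

section
/- Assume that P(I > t) > 0 for every t > 0 and that the tail of I is regularly varying of index −γ for some γ > 0, in the ratio sense: for every c > 0, P(I > ct)/P(I > t) → c^{−γ} as t → +∞. Then P(I_q > t) ≤ P(I > t) for every t, and liminf_{t→+∞} P(I_q > t)/P(I > t) ≥ 1 − e^{−γq}. In particular, for every ε > 0 there exists t_0 such that (1 − e^{−γq} − ε)·P(I > t) ≤ P(I_q > t) ≤ P(I > t) for all t ≥ t_0. -/
/-! If `I > (1 + κ) s`, then `I_q > s`, or `e^{-q} I' > s`, or both `I_q` and `e^{-q} I'` exceed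
`κ s`. Since `I'` is a copy of `I` independent of `I_q`, this gives
`P(I > (1 + κ) s) ≤ P(I_q > s) + P(I > e^q s) + P(I > e^q κ s) P(I_q > κ s)`.
Divided by `P(I > s)`, the last term vanishes in the limit because `P(I_q > κ s) → 0`, and regular
variation turns the rest into `liminf P(I_q > s) / P(I > s) ≥ (1 + κ)^{-γ} - e^{-γ q}`;
then let `κ → 0`. -/

open MeasureTheory Filter ProbabilityTheory Set Topology

lemma lt_or_lt_or_and_of_lt_add {κ s x y z : ℝ} (hx : (1 + κ) * s < x) (hxyz : x ≤ y + z) :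
    s < y ∨ s < z ∨ (κ * s < y ∧ κ * s < z) := by
  by_contra! h
  obtain ⟨hy, hz, hκ⟩ := h
  have := hκ (by linarith)
  linarith

section Tails

variable {Ω : Type*} [MeasurableSpace Ω] {P : Measure Ω} {X Y X' : Ω → ℝ}

lemma tendsto_toReal_measure_lt_atTop [IsFiniteMeasure P] (hX : AEMeasurable X P) :
    Tendsto (fun t => (P {ω | t < X ω}).toReal) atTop (𝓝 0) := by
  have hlim := tendsto_measure_iInter_atTop (μ := P) (s := fun t : ℝ => {ω | t < X ω})
    (fun _ => nullMeasurableSet_lt aemeasurable_const hX)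
    (fun _ _ hst _ hω => hst.trans_lt hω) ⟨0, measure_ne_top _ _⟩
  have hempty : ⋂ t : ℝ, {ω | t < X ω} = ∅ :=
    eq_empty_of_forall_notMem fun ω hω => lt_irrefl (X ω) (mem_iInter.1 hω (X ω))
  rw [hempty, measure_empty] at hlim
  exact (ENNReal.tendsto_toReal ENNReal.zero_ne_top).comp hlim

lemma measure_lt_le_of_ae_le (h : ∀ᵐ ω ∂P, Y ω ≤ X ω) (t : ℝ) :
    P {ω | t < Y ω} ≤ P {ω | t < X ω} :=
  measure_mono_ae (h.mono fun _ hle hlt => lt_of_lt_of_le hlt hle)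

lemma toReal_measure_lt_le_of_le_add [IsFiniteMeasure P] {a : ℝ} (ha : 0 < a)
    (hindep : IndepFun X' Y P) (hident : IdentDistrib X' X P P)
    (hle : ∀ᵐ ω ∂P, X ω ≤ Y ω + a⁻¹ * X' ω) (κ s : ℝ) :
    (P {ω | (1 + κ) * s < X ω}).toReal ≤ (P {ω | s < Y ω}).toReal
      + (P {ω | a * s < X ω}).toReal
      + (P {ω | a * κ * s < X ω}).toReal * (P {ω | κ * s < Y ω}).toReal := by
  have hsub : {ω | (1 + κ) * s < X ω} ≤ᵐ[P] ({ω | s < Y ω} ∪ X' ⁻¹' Ioi (a * s)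
      ∪ (X' ⁻¹' Ioi (a * κ * s) ∩ Y ⁻¹' Ioi (κ * s)) : Set Ω) := by
    filter_upwards [hle] with ω hω (hlt : (1 + κ) * s < X ω)
    show ω ∈ (_ : Set Ω)
    simp only [mem_union, mem_inter_iff, mem_preimage, mem_Ioi, mem_ofPred_eq, mul_assoc,
      ← lt_inv_mul_iff₀ ha]
    have := lt_or_lt_or_and_of_lt_add hlt hω
    tauto
  calc (P {ω | (1 + κ) * s < X ω}).toReal
      ≤ P.real ({ω | s < Y ω} ∪ X' ⁻¹' Ioi (a * s)
          ∪ (X' ⁻¹' Ioi (a * κ * s) ∩ Y ⁻¹' Ioi (κ * s))) :=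
        ENNReal.toReal_mono (measure_ne_top _ _) (measure_mono_ae hsub)
    _ ≤ P.real {ω | s < Y ω} + P.real (X' ⁻¹' Ioi (a * s))
          + P.real (X' ⁻¹' Ioi (a * κ * s) ∩ Y ⁻¹' Ioi (κ * s)) :=
        (measureReal_union_le _ _).trans (by gcongr; exact measureReal_union_le _ _)
    _ = _ := by
        simp only [Measure.real, hindep.measure_inter_preimage_eq_mul _ _ measurableSet_Ioi
          measurableSet_Ioi, ENNReal.toReal_mul, hident.measure_mem_eq measurableSet_Ioi]
        rfl

end Tails

section RegularVariation

variable {T Tq : ℝ → ℝ} {a γ : ℝ}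

lemma sub_rpow_le_liminf_div {κ : ℝ} (hκ : 0 < κ) (ha : 0 < a)
    (hTq_nonneg : ∀ t, 0 ≤ Tq t) (hTq_le : ∀ t, Tq t ≤ T t) (hT_pos : ∀ᶠ t in atTop, 0 < T t)
    (hT : Tendsto T atTop (𝓝 0))
    (hreg : ∀ c : ℝ, 0 < c → Tendsto (fun t => T (c * t) / T t) atTop (𝓝 (c ^ (-γ))))
    (hsplit : ∀ s, T ((1 + κ) * s) ≤ Tq s + T (a * s) + T (a * κ * s) * Tq (κ * s)) :
    (1 + κ) ^ (-γ) - a ^ (-γ) ≤ liminf (fun t => Tq t / T t) atTop := by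
  have hTq : Tendsto (fun s => Tq (κ * s)) atTop (𝓝 0) :=
    tendsto_of_tendsto_of_tendsto_of_le_of_le tendsto_const_nhds
      (hT.comp (tendsto_id.const_mul_atTop hκ)) (fun _ => hTq_nonneg _) (fun _ => hTq_le _)
  have hlim := ((hreg (1 + κ) (by linarith)).sub (hreg a ha)).sub
    ((hreg (a * κ) (mul_pos ha hκ)).mul hTq)
  rw [mul_zero, sub_zero] at hlim
  have hle : ∀ᶠ s in atTop, T ((1 + κ) * s) / T s - T (a * s) / T s
      - T (a * κ * s) / T s * Tq (κ * s) ≤ Tq s / T s := by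
    filter_upwards [hT_pos] with s hs
    rw [div_sub_div_same, div_mul_eq_mul_div, div_sub_div_same]
    exact div_le_div_of_nonneg_right (by linarith [hsplit s]) hs.le
  have hbdd : IsBoundedUnder (· ≤ ·) atTop fun t => Tq t / T t :=
    isBoundedUnder_of ⟨1, fun t => div_le_one_of_le₀ (hTq_le t) ((hTq_nonneg t).trans (hTq_le t))⟩
  exact hlim.liminf_eq ▸ liminf_le_liminf hle hlim.isBoundedUnder_ge hbdd.isCoboundedUnder_ge

lemma one_sub_rpow_le_liminf_div (ha : 0 < a)
    (hTq_nonneg : ∀ t, 0 ≤ Tq t) (hTq_le : ∀ t, Tq t ≤ T t) (hT_pos : ∀ᶠ t in atTop, 0 < T t)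
    (hT : Tendsto T atTop (𝓝 0))
    (hreg : ∀ c : ℝ, 0 < c → Tendsto (fun t => T (c * t) / T t) atTop (𝓝 (c ^ (-γ))))
    (hsplit : ∀ κ, 0 < κ → ∀ s,
      T ((1 + κ) * s) ≤ Tq s + T (a * s) + T (a * κ * s) * Tq (κ * s)) :
    1 - a ^ (-γ) ≤ liminf (fun t => Tq t / T t) atTop := by
  have hcont : ContinuousAt (fun κ : ℝ => (1 + κ) ^ (-γ) - a ^ (-γ)) 0 :=
    ((continuousAt_const.add continuousAt_id).rpow_const (Or.inl (by norm_num))).sub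
      continuousAt_const
  have hlim := hcont.tendsto.mono_left (nhdsWithin_le_nhds (s := Ioi 0))
  rw [add_zero, Real.one_rpow] at hlim
  exact le_of_tendsto hlim (eventually_nhdsWithin_of_forall fun κ hκ =>
    sub_rpow_le_liminf_div hκ ha hTq_nonneg hTq_le hT_pos hT hreg (hsplit κ hκ))

end RegularVariation

lemma eventually_mul_le_of_lt_liminf_div {α : Type*} {l : Filter α} {f g : α → ℝ} {L : ℝ}
    (hf : ∀ x, 0 ≤ f x) (hg : ∀ x, 0 ≤ g x) (hg_pos : ∀ᶠ x in l, 0 < g x)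
    (hL : L < liminf (fun x => f x / g x) l) :
    ∀ᶠ x in l, L * g x ≤ f x := by
  have hbdd : IsBoundedUnder (· ≥ ·) l fun x => f x / g x :=
    isBoundedUnder_of ⟨0, fun x => div_nonneg (hf x) (hg x)⟩
  filter_upwards [eventually_lt_of_lt_liminf hL hbdd, hg_pos] with x hlt hpos
  exact ((lt_div_iff₀ hpos).1 hlt).le

theorem trunc_tail_equiv_regular_general
    {Ω : Type*} [MeasurableSpace Ω] (P : Measure Ω) [IsProbabilityMeasure P]
    (q : ℝ)
    (I Iq I' : Ω → ℝ)
    (hindep : IndepFun I' Iq P)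
    (hident : IdentDistrib I' I P P)
    (hdom : ∀ᵐ ω ∂P, Iq ω ≤ I ω ∧ I ω ≤ Iq ω + Real.exp (-q) * I' ω)
    (hpos : ∀ t : ℝ, 0 < t → 0 < P {ω | t < I ω})
    (γ : ℝ)
    (hreg : ∀ c : ℝ, 0 < c → Tendsto (fun t : ℝ =>
        (P {ω | c * t < I ω}).toReal / (P {ω | t < I ω}).toReal) atTop
        (nhds (c ^ (-γ)))) :
    (∀ t : ℝ, P {ω | t < Iq ω} ≤ P {ω | t < I ω}) ∧
    (1 - Real.exp (-(γ * q)) ≤ liminf (fun t : ℝ =>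
        (P {ω | t < Iq ω}).toReal / (P {ω | t < I ω}).toReal) atTop) ∧
    (∀ ε : ℝ, 0 < ε → ∃ t₀ : ℝ, ∀ t : ℝ, t₀ ≤ t →
      (1 - Real.exp (-(γ * q)) - ε) * (P {ω | t < I ω}).toReal ≤
        (P {ω | t < Iq ω}).toReal ∧
      (P {ω | t < Iq ω}).toReal ≤ (P {ω | t < I ω}).toReal) := by
  have hle : ∀ t, P {ω | t < Iq ω} ≤ P {ω | t < I ω} :=
    measure_lt_le_of_ae_le (hdom.mono fun _ h => h.1)
  have hle_real t := ENNReal.toReal_mono (measure_ne_top P _) (hle t)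
  have hT_pos : ∀ᶠ t in atTop, 0 < (P {ω | t < I ω}).toReal :=
    (eventually_gt_atTop 0).mono fun t ht =>
      ENNReal.toReal_pos (hpos t ht).ne' (measure_ne_top _ _)
  have hsplit κ (_ : 0 < κ) s := toReal_measure_lt_le_of_le_add (Real.exp_pos q) hindep hident
    (hdom.mono fun _ h => by simpa only [Real.exp_neg] using h.2) κ s
  have hliminf := one_sub_rpow_le_liminf_div (Real.exp_pos q) (fun _ => ENNReal.toReal_nonneg)
    hle_real hT_pos (tendsto_toReal_measure_lt_atTop hident.aemeasurable_snd) hreg hsplit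
  rw [← Real.exp_mul, mul_neg, mul_comm] at hliminf
  refine ⟨hle, hliminf, fun ε hε => ?_⟩
  obtain ⟨t₀, ht₀⟩ := eventually_atTop.1 <| eventually_mul_le_of_lt_liminf_div
    (fun _ => ENNReal.toReal_nonneg) (fun _ => ENNReal.toReal_nonneg) hT_pos
    ((sub_lt_self _ hε).trans_le hliminf)
  exact ⟨t₀, fun t ht => ⟨ht₀ t ht, hle_real t⟩⟩

/-- If the tail of `I` is regularly varying of index `-γ` in the ratio sense, then
`P(I_q > t) ≤ P(I > t)` for every `t`, `liminf P(I_q > t)/P(I > t) ≥ 1 - e^{-γq}`, and for every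
`ε > 0` there is `t₀` with `(1 - e^{-γq} - ε) P(I > t) ≤ P(I_q > t) ≤ P(I > t)` for `t ≥ t₀`. -/
theorem trunc_tail_equiv_regular
    {Ω : Type*} [MeasurableSpace Ω] (P : Measure Ω) [IsProbabilityMeasure P]
    (q : ℝ) (hq : 0 < q)
    (I Iq I' : Ω → ℝ)
    (hI : Measurable I) (hIq : Measurable Iq) (hI' : Measurable I')
    (hI_nn : ∀ ω, 0 ≤ I ω) (hIq_nn : ∀ ω, 0 ≤ Iq ω) (hI'_nn : ∀ ω, 0 ≤ I' ω)
    (hindep : IndepFun I' Iq P)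
    (hident : IdentDistrib I' I P P)
    (hdom : ∀ᵐ ω ∂P, Iq ω ≤ I ω ∧ I ω ≤ Iq ω + Real.exp (-q) * I' ω)
    (hpos : ∀ t : ℝ, 0 < t → 0 < P {ω | t < I ω})
    (γ : ℝ) (hγ : 0 < γ)
    (hreg : ∀ c : ℝ, 0 < c → Tendsto (fun t : ℝ =>
        (P {ω | c * t < I ω}).toReal / (P {ω | t < I ω}).toReal) atTop
        (nhds (c ^ (-γ)))) :
    (∀ t : ℝ, P {ω | t < Iq ω} ≤ P {ω | t < I ω}) ∧
    (1 - Real.exp (-(γ * q)) ≤ liminf (fun t : ℝ =>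
        (P {ω | t < Iq ω}).toReal / (P {ω | t < I ω}).toReal) atTop) ∧
    (∀ ε : ℝ, 0 < ε → ∃ t₀ : ℝ, ∀ t : ℝ, t₀ ≤ t →
      (1 - Real.exp (-(γ * q)) - ε) * (P {ω | t < I ω}).toReal ≤
        (P {ω | t < Iq ω}).toReal ∧
      (P {ω | t < Iq ω}).toReal ≤ (P {ω | t < I ω}).toReal) :=
  trunc_tail_equiv_regular_general P q I Iq I' hindep hident hdom hpos γ hreg
end

section
/- Let I be an almost surely strictly positive real random variable, let f : (0,∞) → [0,∞) be nondecreasing, and let r > 1. Then, as an identity in [0,+∞], ∫_1^∞ P(r^{−t} ≤ f(r^{−t}·I)) dt = (1/log r) · ∫_0^∞ P(s ≤ f(s)·I and r·s < I) · s^{−1} ds. -/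
/-!
By Tonelli, both sides are integrals over `ω` of the measure of a section of a measurable set
in `ℝ × Ω`. For fixed `c = I ω > 0`, the substitution `s = c r^{-t}` maps `(1, ∞)` onto
`(0, c / r)`, turns the condition `r^{-t} ≤ f (r^{-t} c)` into `s ≤ f s * c`, and pushes the
Lebesgue measure `dt` forward to `ds / (s log r)`.
-/

open MeasureTheory Filter Set

theorem MonotoneOn.measurable_indicator {α β : Type*} [MeasurableSpace α] [TopologicalSpace α]
    [BorelSpace α] [LinearOrder α] [OrderClosedTopology α]
    [MeasurableSpace β] [TopologicalSpace β] [BorelSpace β] [LinearOrder β] [OrderTopology β]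
    [SecondCountableTopology β] [Zero β]
    {f : α → β} {s : Set α} (hf : MonotoneOn f s) (hs : MeasurableSet s) :
    Measurable (s.indicator f) := by
  refine measurable_of_restrict_of_restrict_compl hs ?_ ?_
  · have hmono : Monotone (s.domRestrict (s.indicator f)) := fun x y hxy => by
      simpa only [domRestrict_apply, indicator_of_mem x.2, indicator_of_mem y.2]
        using hf x.2 y.2 hxy
    exact hmono.measurable
  · have hzero : sᶜ.domRestrict (s.indicator f) = 0 :=
      funext fun x => indicator_of_notMem x.2 f
    exact hzero ▸ measurable_zero

noncomputable def multiplicativeHaar : Measure ℝ :=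
  (volume.restrict (Ioi 0)).withDensity fun s => ENNReal.ofReal s⁻¹

instance : SFinite multiplicativeHaar := by
  unfold multiplicativeHaar
  infer_instance

section LogSubstitution

variable {r : ℝ} (c : ℝ)

theorem hasDerivAt_const_mul_rpow_neg (hr : 0 < r) (t : ℝ) :
    HasDerivAt (fun t => c * r ^ (-t)) (-(c * r ^ (-t) * Real.log r)) t := by
  have h := (Real.hasStrictDerivAt_const_rpow hr (-t)).hasDerivAt.comp t (hasDerivAt_neg t)
  exact (h.const_mul c).congr_deriv (by ring)

variable {c}

theorem injective_const_mul_rpow_neg (hc : c ≠ 0) (hr₀ : 0 < r) (hr₁ : r ≠ 1) :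
    Function.Injective fun t : ℝ => c * r ^ (-t) := fun t u htu => by
  simpa [Real.rpow_right_inj hr₀ hr₁, hc] using htu

theorem range_const_mul_rpow_neg (hc : 0 < c) (hr₀ : 0 < r) (hr₁ : r ≠ 1) :
    range (fun t : ℝ => c * r ^ (-t)) = Ioi 0 := by
  refine Subset.antisymm (range_subset_iff.2 fun t => mem_Ioi.2 (by positivity)) ?_
  refine fun s (hs : 0 < s) => ⟨-Real.logb r (s / c), ?_⟩
  simp only [neg_neg, Real.rpow_logb hr₀ hr₁ (div_pos hs hc)]
  field_simp

theorem map_const_mul_rpow_neg_volume (hc : 0 < c) (hr₀ : 0 < r) (hr₁ : r ≠ 1) :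
    volume.map (fun t : ℝ => c * r ^ (-t)) =
      ENNReal.ofReal (1 / |Real.log r|) • multiplicativeHaar := by
  have hφ : Measurable fun t : ℝ => c * r ^ (-t) := by fun_prop
  ext B hB
  rw [Measure.map_apply hφ hB, Measure.smul_apply, smul_eq_mul, multiplicativeHaar,
    withDensity_apply _ hB, Measure.restrict_restrict hB,
    ← range_const_mul_rpow_neg hc hr₀ hr₁, ← image_preimage_eq_inter_range,
    lintegral_image_eq_lintegral_abs_deriv_mul (hφ hB)
      (fun t _ => (hasDerivAt_const_mul_rpow_neg c hr₀ t).hasDerivWithinAt)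
      (injective_const_mul_rpow_neg hc.ne' hr₀ hr₁).injOn]
  have hL : 0 < |Real.log r| := abs_pos.2 (Real.log_ne_zero_of_pos_of_ne_one hr₀ hr₁)
  have hJacobian : ∀ t : ℝ, ENNReal.ofReal |-(c * r ^ (-t) * Real.log r)| *
      ENNReal.ofReal (c * r ^ (-t))⁻¹ = ENNReal.ofReal |Real.log r| := fun t => by
    have hφt : 0 < c * r ^ (-t) := by positivity
    rw [← ENNReal.ofReal_mul (abs_nonneg _), abs_neg, abs_mul, abs_of_pos hφt]
    field_simp
  simp only [hJacobian, setLIntegral_const]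
  rw [← mul_assoc, ← ENNReal.ofReal_mul (by positivity), one_div_mul_cancel hL.ne',
    ENNReal.ofReal_one, one_mul]

end LogSubstitution

theorem volume_restrict_Ioi_one_setOf_rpow_neg_le {F : ℝ → ℝ} (hF : Measurable F) {c r : ℝ}
    (hc : 0 < c) (hr : 1 < r) :
    volume.restrict (Ioi 1) {t : ℝ | r ^ (-t) ≤ F (r ^ (-t) * c)} =
      ENNReal.ofReal (1 / Real.log r) * multiplicativeHaar {s | s ≤ F s * c ∧ r * s < c} := by
  have hr₀ : 0 < r := by linarith
  have hlt_iff (t : ℝ) : r * (r ^ (-t) * c) < c ↔ 1 < t := by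
    rw [show r * (r ^ (-t) * c) = c * r ^ (1 + -t) by rw [Real.rpow_add hr₀, Real.rpow_one]; ring,
      mul_lt_iff_lt_one_right hc, ← Real.rpow_zero r, Real.rpow_lt_rpow_left_iff hr]
    constructor <;> intro h <;> linarith
  have hpreimage : {t : ℝ | r ^ (-t) ≤ F (r ^ (-t) * c)} ∩ Ioi 1 =
      (fun t => c * r ^ (-t)) ⁻¹' {s | s ≤ F s * c ∧ r * s < c} := by
    ext t
    simp only [mem_inter_iff, mem_ofPred_eq, mem_Ioi, mem_preimage, mul_comm c,
      mul_le_mul_iff_left₀ hc, hlt_iff]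
  have hmeas : MeasurableSet {s | s ≤ F s * c ∧ r * s < c} := by measurability
  rw [Measure.restrict_apply' measurableSet_Ioi, hpreimage,
    ← Measure.map_apply (by fun_prop) hmeas, map_const_mul_rpow_neg_volume hc hr₀ hr.ne',
    abs_of_pos (Real.log_pos hr)]
  rfl

theorem change_of_variables_at_zero_general
    {Ω : Type*} [MeasurableSpace Ω] (ℙ : Measure Ω) [IsProbabilityMeasure ℙ]
    (I : Ω → ℝ) (hI : Measurable I) (hIpos : ∀ᵐ ω ∂ℙ, 0 < I ω)
    (f : ℝ → ℝ) (hf_mono : MonotoneOn f (Ioi 0))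
    (r : ℝ) (hr : 1 < r) :
    ∫⁻ t in Ioi (1 : ℝ), ℙ {ω | r ^ (-t) ≤ f (r ^ (-t) * I ω)} =
      ENNReal.ofReal (1 / Real.log r) *
        ∫⁻ s in Ioi (0 : ℝ),
          ℙ {ω | s ≤ f s * I ω ∧ r * s < I ω} * ENNReal.ofReal s⁻¹ := by
  set F := (Ioi 0).indicator f
  have hF : Measurable F := hf_mono.measurable_indicator measurableSet_Ioi
  set S : Set (ℝ × Ω) := {p | r ^ (-p.1) ≤ F (r ^ (-p.1) * I p.2)}
  set T : Set (ℝ × Ω) := {p | p.1 ≤ F p.1 * I p.2 ∧ r * p.1 < I p.2}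
  have hS : MeasurableSet S := by measurability
  have hT : MeasurableSet T := by measurability
  have hLHS : ∫⁻ t in Ioi (1 : ℝ), ℙ {ω | r ^ (-t) ≤ f (r ^ (-t) * I ω)} =
      ∫⁻ ω, volume.restrict (Ioi 1) ((·, ω) ⁻¹' S) ∂ℙ := by
    rw [← Measure.prod_apply_symm hS, Measure.prod_apply hS]
    refine setLIntegral_congr_fun measurableSet_Ioi fun t _ =>
      measure_congr (eventuallyEq_set.2 ?_)
    filter_upwards [hIpos] with ω hω
    have hpos : r ^ (-t) * I ω ∈ Ioi 0 := mem_Ioi.2 (by positivity)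
    simp only [S, F, mem_ofPred_eq, mem_preimage, indicator_of_mem hpos]
  have hRHS :
      ∫⁻ s in Ioi (0 : ℝ), ℙ {ω | s ≤ f s * I ω ∧ r * s < I ω} * ENNReal.ofReal s⁻¹ =
      ∫⁻ ω, multiplicativeHaar ((·, ω) ⁻¹' T) ∂ℙ := by
    rw [← Measure.prod_apply_symm hT, Measure.prod_apply hT, multiplicativeHaar,
      lintegral_withDensity_eq_lintegral_mul _ (by fun_prop) (measurable_measure_prodMk_left hT)]
    refine setLIntegral_congr_fun measurableSet_Ioi fun s hs => ?_
    simp [T, F, indicator_of_mem hs, mul_comm]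
  rw [hLHS, hRHS, ← lintegral_const_mul' _ _ ENNReal.ofReal_ne_top]
  refine lintegral_congr_ae ?_
  filter_upwards [hIpos] with ω hω
  exact volume_restrict_Ioi_one_setOf_rpow_neg_le hF hω hr

/-- Change-of-variables identity
`∫_1^∞ P(r^{-t} ≤ f(r^{-t} I)) dt = (1/log r) ∫_0^∞ P(s ≤ f(s) I, rs < I) s⁻¹ ds`. -/
theorem change_of_variables_at_zero
    {Ω : Type*} [MeasurableSpace Ω] (ℙ : Measure Ω) [IsProbabilityMeasure ℙ]
    (I : Ω → ℝ) (hI : Measurable I) (hIpos : ∀ᵐ ω ∂ℙ, 0 < I ω)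
    (f : ℝ → ℝ) (hf_nn : ∀ s : ℝ, 0 < s → 0 ≤ f s) (hf_mono : MonotoneOn f (Ioi 0))
    (r : ℝ) (hr : 1 < r) :
    ∫⁻ t in Ioi (1 : ℝ), ℙ {ω | r ^ (-t) ≤ f (r ^ (-t) * I ω)} =
      ENNReal.ofReal (1 / Real.log r) *
        ∫⁻ s in Ioi (0 : ℝ),
          ℙ {ω | s ≤ f s * I ω ∧ r * s < I ω} * ENNReal.ofReal s⁻¹ :=
  change_of_variables_at_zero_general ℙ I hI hIpos f hf_mono r hr
end

section
/- Let I be an almost surely strictly positive real random variable, let f : (0,∞) → [0,∞) be nondecreasing, and let r > 1. Then ∑_{n=1}^∞ P(r^{−n} ≤ f(r^{−(n+1)}·I)) ≤ (1/log r) · ∫_0^∞ P(s ≤ f(s)·I and r·s < I) · s^{−1} ds ≤ ∑_{n=1}^∞ P(r^{−(n+1)} ≤ f(r^{−n}·I)), as inequalities in [0,+∞]. -/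
/-!
By Tonelli the integral equals `𝔼 ∫ 1{s ≤ f(s) I, r s < I} ds/s`. For fixed `I = c > 0` the
intervals `[c r^{-(n+2)}, c r^{-(n+1)})`, `n ∈ ℕ`, partition `(0, c/r)` and each has `ds/s`-mass
`log r`. As `f` is nondecreasing, the `n`-th interval lies inside `{s ≤ f(s) c}` as soon as
`r^{-(n+1)} ≤ f(c r^{-(n+2)})`, and it can meet that set only if `r^{-(n+2)} ≤ f(c r^{-(n+1)})`.
Summing over `n` and taking expectations gives both inequalities.
-/

open MeasureTheory Filter Set
open scoped Function

noncomputable def logMeasure : Measure ℝ :=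
  (volume.restrict (Ioi 0)).withDensity fun s => ENNReal.ofReal s⁻¹

instance : SFinite logMeasure := by
  rw [logMeasure]
  infer_instance

lemma logMeasure_Ico {a b : ℝ} (ha : 0 < a) (hab : a ≤ b) :
    logMeasure (Ico a b) = ENNReal.ofReal (Real.log (b / a)) := by
  have hint : IntegrableOn (fun s : ℝ => s⁻¹) (Ioc a b) := by
    rw [← intervalIntegrable_iff_integrableOn_Ioc_of_le hab]
    refine intervalIntegral.intervalIntegrable_inv (fun x hx => ?_) continuousOn_id
    rw [uIcc_of_le hab] at hx
    exact (ha.trans_le hx.1).ne'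
  rw [logMeasure, withDensity_apply _ measurableSet_Ico,
    Measure.restrict_restrict measurableSet_Ico,
    inter_eq_left.2 (show Ico a b ⊆ Ioi 0 from fun s hs => ha.trans_le hs.1),
    Measure.restrict_congr_set Ico_ae_eq_Ioc, ← ofReal_integral_eq_lintegral_ofReal hint,
    ← intervalIntegral.integral_of_le hab, integral_inv_of_pos ha (ha.trans_le hab)]
  filter_upwards [ae_restrict_mem measurableSet_Ioc] with s hs
  exact inv_nonneg.2 (ha.trans hs.1).le

lemma ae_logMeasure_pos : ∀ᵐ s ∂logMeasure, 0 < s :=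
  (withDensity_absolutelyContinuous _ _).ae_le (ae_restrict_mem measurableSet_Ioi)

lemma setLIntegral_Ioi_measure_mul_inv_eq_lintegral_logMeasure {Ω : Type*} [MeasurableSpace Ω]
    (ν : Measure Ω) [SFinite ν] {P : ℝ → Ω → Prop}
    (hP : MeasurableSet {x : ℝ × Ω | P x.1 x.2}) :
    ∫⁻ s in Ioi 0, ν {ω | P s ω} * ENNReal.ofReal s⁻¹ = ∫⁻ ω, logMeasure {s | P s ω} ∂ν := by
  refine Eq.trans ?_ (Measure.prod_apply_symm (μ := logMeasure) hP)
  rw [Measure.prod_apply hP, logMeasure,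
    lintegral_withDensity_eq_lintegral_mul _ (by fun_prop) (measurable_measure_prodMk_left hP)]
  exact lintegral_congr fun s => mul_comm _ _

lemma lintegral_tsum_indicator_one {Ω : Type*} [MeasurableSpace Ω] (μ : Measure Ω)
    {E : ℕ → Set Ω} (hE : ∀ n, MeasurableSet (E n)) :
    ∫⁻ ω, ∑' n, (E n).indicator 1 ω ∂μ = ∑' n, μ (E n) := by
  rw [lintegral_tsum fun n => (measurable_one.indicator (hE n)).aemeasurable]
  exact tsum_congr fun n => lintegral_indicator_one (hE n)

section CountablePartition

variable {α : Type*} [MeasurableSpace α] {ν : Measure α} {J : ℕ → Set α} {A : Set α} {N : Set ℕ}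
  {m : ENNReal}

lemma mul_tsum_indicator_eq_tsum_subtype (hmass : ∀ n, ν (J n) = m) :
    m * ∑' n, N.indicator 1 n = ∑' n : N, ν (J n) := by
  rw [← ENNReal.tsum_mul_left, tsum_subtype N fun n => ν (J n)]
  refine tsum_congr fun n => ?_
  by_cases hn : n ∈ N <;> simp [hn, hmass]

lemma mul_tsum_indicator_le_measure (hJ : ∀ n, MeasurableSet (J n))
    (hdisj : Pairwise (Disjoint on J)) (hmass : ∀ n, ν (J n) = m) (hsub : ∀ n ∈ N, J n ⊆ A) :
    m * ∑' n, N.indicator 1 n ≤ ν A := by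
  rw [mul_tsum_indicator_eq_tsum_subtype hmass,
    ← measure_biUnion N.to_countable (hdisj.set_pairwise N) fun n _ => hJ n]
  exact measure_mono (iUnion₂_subset hsub)

lemma measure_le_mul_tsum_indicator (hmass : ∀ n, ν (J n) = m)
    (hcover : A ≤ᵐ[ν] ⋃ n ∈ N, J n) :
    ν A ≤ m * ∑' n, N.indicator 1 n := by
  rw [mul_tsum_indicator_eq_tsum_subtype hmass]
  exact (measure_mono_ae hcover).trans (measure_biUnion_le ν N.to_countable J)

end CountablePartition

def geomIco (r c : ℝ) (n : ℕ) : Set ℝ :=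
  Ico (r ^ (-((n : ℝ) + 2)) * c) (r ^ (-((n : ℝ) + 1)) * c)

section GeomIco

variable {r c : ℝ}

lemma logMeasure_geomIco (hr : 1 < r) (hc : 0 < c) (n : ℕ) :
    logMeasure (geomIco r c n) = ENNReal.ofReal (Real.log r) := by
  have hr0 : 0 < r := zero_lt_one.trans hr
  rw [geomIco, logMeasure_Ico (by positivity) (by gcongr; exacts [hr.le, by linarith]),
    mul_div_mul_right _ _ hc.ne', ← Real.rpow_sub hr0]
  norm_num

lemma pairwise_disjoint_geomIco (hr : 1 < r) (hc : 0 < c) :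
    Pairwise (Disjoint on geomIco r c) := by
  have hanti : Antitone fun n : ℕ => r ^ (-((n : ℝ) + 1)) * c := fun m n hmn =>
    mul_le_mul_of_nonneg_right (Real.rpow_le_rpow_of_exponent_le hr.le
      (by simp only [neg_le_neg_iff, add_le_add_iff_right, Nat.cast_le, hmn])) hc.le
  convert hanti.pairwise_disjoint_on_Ico_succ using 3 with n
  simp only [geomIco, Order.succ_eq_add_one, Nat.cast_add, Nat.cast_one]
  ring_nf

lemma exists_mem_geomIco (hr : 1 < r) (hc : 0 < c) {s : ℝ} (hs : 0 < s) (hsc : r * s < c) :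
    ∃ n, s ∈ geomIco r c n := by
  obtain ⟨m, hm⟩ := exists_mem_Ico_zpow (div_pos hs hc) hr
  have hm2 : m + 2 ≤ 0 := by
    have hsc' : s / c < r ^ (-1 : ℤ) := by
      rw [zpow_neg_one, div_lt_iff₀ hc, inv_mul_eq_div, lt_div_iff₀ (zero_lt_one.trans hr)]
      linarith
    have := (zpow_lt_zpow_iff_right₀ hr).1 (hm.1.trans_lt hsc')
    omega
  refine ⟨(-(m + 2)).toNat, ?_⟩
  have hcast : (((-(m + 2)).toNat : ℕ) : ℝ) = -((m : ℝ) + 2) := by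
    exact_mod_cast Int.toNat_of_nonneg (by omega)
  rw [mem_Ico, le_div_iff₀ hc, div_lt_iff₀ hc] at hm
  rw [geomIco, hcast, show -(-((m : ℝ) + 2) + 2) = ((m : ℤ) : ℝ) by ring,
    show -(-((m : ℝ) + 2) + 1) = ((m + 1 : ℤ) : ℝ) by push_cast; ring,
    Real.rpow_intCast, Real.rpow_intCast]
  exact hm

end GeomIco

section Monotone

variable {f : ℝ → ℝ} {r c : ℝ}

lemma geomIco_subset_of_le (hf : MonotoneOn f (Ioi 0)) (hr : 1 < r) (hc : 0 < c) {n : ℕ}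
    (hn : r ^ (-((n : ℝ) + 1)) ≤ f (r ^ (-((n : ℝ) + 2)) * c)) :
    geomIco r c n ⊆ {s | s ≤ f s * c ∧ r * s < c} := by
  have hr0 : 0 < r := zero_lt_one.trans hr
  have hleft : 0 < r ^ (-((n : ℝ) + 2)) * c := by positivity
  intro s ⟨hs_left, hs_right⟩
  constructor
  · calc s ≤ r ^ (-((n : ℝ) + 1)) * c := hs_right.le
      _ ≤ f (r ^ (-((n : ℝ) + 2)) * c) * c := by gcongr
      _ ≤ f s * c := by gcongr; exact hf hleft (hleft.trans_le hs_left) hs_left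
  · calc r * s < r * (r ^ (-((n : ℝ) + 1)) * c) := by gcongr
      _ = r ^ (-(n : ℝ)) * c := by
        rw [show -(n : ℝ) = 1 + -((n : ℝ) + 1) by ring, Real.rpow_add hr0, Real.rpow_one,
          mul_assoc]
      _ ≤ c := mul_le_of_le_one_left hc.le
        (Real.rpow_le_one_of_one_le_of_nonpos hr.le (by simp))

lemma le_of_mem_geomIco (hf : MonotoneOn f (Ioi 0)) (hr : 1 < r) (hc : 0 < c) {n : ℕ} {s : ℝ}
    (hs : s ∈ geomIco r c n) (hsf : s ≤ f s * c) :
    r ^ (-((n : ℝ) + 2)) ≤ f (r ^ (-((n : ℝ) + 1)) * c) := by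
  have hr0 : 0 < r := zero_lt_one.trans hr
  have hs0 : 0 < s := (show 0 < r ^ (-((n : ℝ) + 2)) * c by positivity).trans_le hs.1
  refine le_of_mul_le_mul_right ?_ hc
  calc r ^ (-((n : ℝ) + 2)) * c ≤ s := hs.1
    _ ≤ f s * c := hsf
    _ ≤ f (r ^ (-((n : ℝ) + 1)) * c) * c := by gcongr; exact hf hs0 (hs0.trans hs.2) hs.2.le

lemma ofReal_log_mul_tsum_indicator_le_logMeasure (hf : MonotoneOn f (Ioi 0)) (hr : 1 < r)
    (hc : 0 < c) :
    ENNReal.ofReal (Real.log r) *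
        ∑' n, {n : ℕ | r ^ (-((n : ℝ) + 1)) ≤ f (r ^ (-((n : ℝ) + 2)) * c)}.indicator 1 n ≤
      logMeasure {s | s ≤ f s * c ∧ r * s < c} :=
  mul_tsum_indicator_le_measure (fun _ => measurableSet_Ico) (pairwise_disjoint_geomIco hr hc)
    (logMeasure_geomIco hr hc) fun _ hn => geomIco_subset_of_le hf hr hc hn

lemma logMeasure_le_ofReal_log_mul_tsum_indicator (hf : MonotoneOn f (Ioi 0)) (hr : 1 < r)
    (hc : 0 < c) :
    logMeasure {s | s ≤ f s * c ∧ r * s < c} ≤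
      ENNReal.ofReal (Real.log r) *
        ∑' n, {n : ℕ | r ^ (-((n : ℝ) + 2)) ≤ f (r ^ (-((n : ℝ) + 1)) * c)}.indicator 1 n := by
  refine measure_le_mul_tsum_indicator (logMeasure_geomIco hr hc) ?_
  filter_upwards [ae_logMeasure_pos] with s hs ⟨hsf, hsc⟩
  obtain ⟨n, hn⟩ := exists_mem_geomIco hr hc hs hsc
  exact mem_biUnion (le_of_mem_geomIco hf hr hc hn hsf) hn

end Monotone

lemma ofReal_one_div_mul_ofReal_mul {x : ℝ} (hx : 0 < x) (y : ENNReal) :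
    ENNReal.ofReal (1 / x) * (ENNReal.ofReal x * y) = y := by
  rw [← mul_assoc, ← ENNReal.ofReal_mul (by positivity), one_div_mul_cancel hx.ne',
    ENNReal.ofReal_one, one_mul]

lemma MonotoneOn.exists_measurable_eqOn_Ioi {f : ℝ → ℝ} (hf : MonotoneOn f (Ioi 0)) :
    ∃ g : ℝ → ℝ, Measurable g ∧ EqOn f g (Ioi 0) :=
  ⟨fun s => f (Real.exp (Real.log s)),
    (Monotone.measurable fun a b hab => hf (Real.exp_pos a) (Real.exp_pos b)
      (Real.exp_le_exp.2 hab)).comp Real.measurable_log,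
    fun s hs => by simp only [Real.exp_log hs]⟩

theorem series_integral_comparison_of_measurable
    {Ω : Type*} [MeasurableSpace Ω] (ℙ : Measure Ω) [SFinite ℙ]
    (I : Ω → ℝ) (hI : Measurable I) (hIpos : ∀ᵐ ω ∂ℙ, 0 < I ω)
    (f : ℝ → ℝ) (hf_meas : Measurable f) (hf_mono : MonotoneOn f (Ioi 0))
    (r : ℝ) (hr : 1 < r) :
    (∑' n : ℕ, ℙ {ω | r ^ (-((n : ℝ) + 1)) ≤ f (r ^ (-((n : ℝ) + 2)) * I ω)}) ≤
      ENNReal.ofReal (1 / Real.log r) *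
        (∫⁻ s in Ioi (0 : ℝ),
          ℙ {ω | s ≤ f s * I ω ∧ r * s < I ω} * ENNReal.ofReal s⁻¹) ∧
    ENNReal.ofReal (1 / Real.log r) *
        (∫⁻ s in Ioi (0 : ℝ),
          ℙ {ω | s ≤ f s * I ω ∧ r * s < I ω} * ENNReal.ofReal s⁻¹) ≤
      ∑' n : ℕ, ℙ {ω | r ^ (-((n : ℝ) + 2)) ≤ f (r ^ (-((n : ℝ) + 1)) * I ω)} := by
  have hlog : 0 < Real.log r := Real.log_pos hr
  have hS : MeasurableSet {p : ℝ × Ω | p.1 ≤ f p.1 * I p.2 ∧ r * p.1 < I p.2} :=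
    measurableSet_setOfPred.2 (by fun_prop)
  have hE (a b : ℝ) : MeasurableSet {ω | a ≤ f (b * I ω)} := measurableSet_setOfPred.2 (by fun_prop)
  rw [setLIntegral_Ioi_measure_mul_inv_eq_lintegral_logMeasure ℙ hS]
  constructor <;>
    rw [← ofReal_one_div_mul_ofReal_mul hlog (∑' n, _),
      ← lintegral_tsum_indicator_one ℙ fun n => hE _ _,
      ← lintegral_const_mul' (ENNReal.ofReal (Real.log r)) _ ENNReal.ofReal_ne_top] <;>
    gcongr _ * ?_ <;>
    refine lintegral_mono_ae ?_ <;>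
    filter_upwards [hIpos] with ω hω
  exacts [ofReal_log_mul_tsum_indicator_le_logMeasure hf_mono hr hω,
    logMeasure_le_ofReal_log_mul_tsum_indicator hf_mono hr hω]

theorem series_integral_comparison_at_zero_general
    {Ω : Type*} [MeasurableSpace Ω] (ℙ : Measure Ω) [IsProbabilityMeasure ℙ]
    (I : Ω → ℝ) (hI : Measurable I) (hIpos : ∀ᵐ ω ∂ℙ, 0 < I ω)
    (f : ℝ → ℝ) (hf_mono : MonotoneOn f (Ioi 0))
    (r : ℝ) (hr : 1 < r) :
    (∑' n : ℕ, ℙ {ω | r ^ (-((n : ℝ) + 1)) ≤ f (r ^ (-((n : ℝ) + 2)) * I ω)}) ≤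
      ENNReal.ofReal (1 / Real.log r) *
        (∫⁻ s in Ioi (0 : ℝ),
          ℙ {ω | s ≤ f s * I ω ∧ r * s < I ω} * ENNReal.ofReal s⁻¹) ∧
    ENNReal.ofReal (1 / Real.log r) *
        (∫⁻ s in Ioi (0 : ℝ),
          ℙ {ω | s ≤ f s * I ω ∧ r * s < I ω} * ENNReal.ofReal s⁻¹) ≤
      ∑' n : ℕ, ℙ {ω | r ^ (-((n : ℝ) + 2)) ≤ f (r ^ (-((n : ℝ) + 1)) * I ω)} := by
  obtain ⟨g, hg_meas, hfg⟩ := hf_mono.exists_measurable_eqOn_Ioi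
  have hr0 : 0 < r := zero_lt_one.trans hr
  have hP (a b : ℝ) (hb : 0 < b) : ℙ {ω | a ≤ f (b * I ω)} = ℙ {ω | a ≤ g (b * I ω)} := by
    refine measure_congr (eventuallyEq_set.2 ?_)
    filter_upwards [hIpos] with ω hω
    rw [hfg (mul_pos hb hω)]
  convert series_integral_comparison_of_measurable ℙ I hI hIpos g hg_meas (hf_mono.congr hfg) r hr
    using 3 <;> first
    | exact funext fun n => hP _ _ (Real.rpow_pos_of_pos hr0 _)
    | exact setLIntegral_congr_fun measurableSet_Ioi fun s hs => by rw [hfg hs]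

/-- Series–integral comparison at 0:
`∑_{n≥1} P(r^{-n} ≤ f(r^{-(n+1)} I)) ≤ (1/log r) ∫_0^∞ P(s ≤ f(s) I, rs < I) s⁻¹ ds
  ≤ ∑_{n≥1} P(r^{-(n+1)} ≤ f(r^{-n} I))`. -/
theorem series_integral_comparison_at_zero
    {Ω : Type*} [MeasurableSpace Ω] (ℙ : Measure Ω) [IsProbabilityMeasure ℙ]
    (I : Ω → ℝ) (hI : Measurable I) (hIpos : ∀ᵐ ω ∂ℙ, 0 < I ω)
    (f : ℝ → ℝ) (hf_nn : ∀ s : ℝ, 0 < s → 0 ≤ f s) (hf_mono : MonotoneOn f (Ioi 0))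
    (r : ℝ) (hr : 1 < r) :
    (∑' n : ℕ, ℙ {ω | r ^ (-((n : ℝ) + 1)) ≤ f (r ^ (-((n : ℝ) + 2)) * I ω)}) ≤
      ENNReal.ofReal (1 / Real.log r) *
        (∫⁻ s in Ioi (0 : ℝ),
          ℙ {ω | s ≤ f s * I ω ∧ r * s < I ω} * ENNReal.ofReal s⁻¹) ∧
    ENNReal.ofReal (1 / Real.log r) *
        (∫⁻ s in Ioi (0 : ℝ),
          ℙ {ω | s ≤ f s * I ω ∧ r * s < I ω} * ENNReal.ofReal s⁻¹) ≤
      ∑' n : ℕ, ℙ {ω | r ^ (-((n : ℝ) + 2)) ≤ f (r ^ (-((n : ℝ) + 1)) * I ω)} :=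
  series_integral_comparison_at_zero_general ℙ I hI hIpos f hf_mono r hr
end

section
/- Let I be a nonnegative real random variable, let f : (0,∞) → [0,∞) be nondecreasing with f(s) → 0 as s → 0+, let r > 1 and λ > 0. Then ∫_0^λ P(s ≤ f(s)·I and r·s < I) · s^{−1} ds < ∞ if and only if ∫_0^λ P(s ≤ f(s)·I) · s^{−1} ds < ∞. -/
/-!
Since `f(s) → 0`, there is `d > 0` with `r f(s) < 1` on `(0, d]`. There, `s ≤ f(s) I` forces
`I > 0` and hence `r s ≤ r f(s) I < I`, so the two events coincide and the two integrands agree on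
`(0, d]`. On `(d, λ]` the larger integrand is bounded by `1/d`, so both integrals are finite or
infinite together.
-/

open MeasureTheory Filter Set

theorem setLIntegral_lt_top_iff_of_eqOn_inter {α : Type*} [MeasurableSpace α] {μ : Measure α}
    {f g : α → ENNReal} {s t : Set α} (hs : MeasurableSet s) (ht : MeasurableSet t)
    (hfg : f ≤ g) (heq : EqOn f g (s ∩ t)) (hg : ∫⁻ x in s \ t, g x ∂μ < ⊤) :
    ∫⁻ x in s, f x ∂μ < ⊤ ↔ ∫⁻ x in s, g x ∂μ < ⊤ := by
  refine ⟨fun hf => ?_, fun hg' => (lintegral_mono hfg).trans_lt hg'⟩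
  have hinter : ∫⁻ x in s ∩ t, g x ∂μ ≤ ∫⁻ x in s, f x ∂μ :=
    calc ∫⁻ x in s ∩ t, g x ∂μ = ∫⁻ x in s ∩ t, f x ∂μ :=
          (setLIntegral_congr_fun (hs.inter ht) heq).symm
      _ ≤ ∫⁻ x in s, f x ∂μ := lintegral_mono_set inter_subset_left
  rw [← lintegral_inter_add_sdiff g s ht]
  exact ENNReal.add_lt_top.mpr ⟨hinter.trans_lt hf, hg⟩

theorem lt_of_le_mul_of_mul_lt_one {s c x r : ℝ} (hs : 0 < s) (hx : 0 ≤ x) (hr : 0 ≤ r)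
    (hrc : r * c < 1) (h : s ≤ c * x) : r * s < x := by
  have hx_pos : 0 < x := hx.lt_of_ne (by rintro rfl; linarith [mul_zero c])
  calc r * s ≤ r * (c * x) := mul_le_mul_of_nonneg_left h hr
    _ = (r * c) * x := by ring
    _ < x := by nlinarith

theorem setLIntegral_measure_mul_ofReal_inv_Ioc_lt_top {Ω : Type*} [MeasurableSpace Ω]
    (μ : Measure Ω) [IsFiniteMeasure μ] (A : ℝ → Set Ω) {d : ℝ} (hd : 0 < d) (l : ℝ) :
    ∫⁻ s in Ioc d l, μ (A s) * ENNReal.ofReal s⁻¹ < ⊤ := by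
  have hbound :
      ∀ s ∈ Ioc d l, μ (A s) * ENNReal.ofReal s⁻¹ ≤ μ univ * ENNReal.ofReal d⁻¹ :=
    fun s hs => mul_le_mul' (measure_mono (subset_univ _))
      (ENNReal.ofReal_le_ofReal (inv_anti₀ hd hs.1.le))
  calc ∫⁻ s in Ioc d l, μ (A s) * ENNReal.ofReal s⁻¹
      ≤ ∫⁻ _ in Ioc d l, μ univ * ENNReal.ofReal d⁻¹ :=
        setLIntegral_mono measurable_const hbound
    _ = μ univ * ENNReal.ofReal d⁻¹ * volume (Ioc d l) := setLIntegral_const _ _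
    _ < ⊤ := ENNReal.mul_lt_top
      (ENNReal.mul_lt_top (measure_lt_top μ univ) ENNReal.ofReal_lt_top) measure_Ioc_lt_top

theorem finiteness_equivalence_at_zero_general
    {Ω : Type*} [MeasurableSpace Ω] (ℙ : Measure Ω) [IsProbabilityMeasure ℙ]
    (I : Ω → ℝ) (hI_nn : ∀ ω, 0 ≤ I ω)
    (f : ℝ → ℝ)
    (hf0 : Tendsto f (nhdsWithin 0 (Ioi 0)) (nhds 0))
    (r : ℝ) (hr : 1 < r) (l : ℝ) :
    (∫⁻ s in Ioc (0 : ℝ) l,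
        ℙ {ω | s ≤ f s * I ω ∧ r * s < I ω} * ENNReal.ofReal s⁻¹ < ⊤) ↔
    (∫⁻ s in Ioc (0 : ℝ) l,
        ℙ {ω | s ≤ f s * I ω} * ENNReal.ofReal s⁻¹ < ⊤) := by
  have hr0 : 0 < r := one_pos.trans hr
  obtain ⟨d, hd, hf_small⟩ :=
    mem_nhdsGT_iff_exists_Ioc_subset.mp (hf0.eventually_lt_const (inv_pos.mpr hr0))
  have hevents :
      ∀ s ∈ Ioc 0 d, {ω | s ≤ f s * I ω ∧ r * s < I ω} = {ω | s ≤ f s * I ω} :=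
    fun s hs => Set.ext fun ω => and_iff_left_of_imp fun h =>
      lt_of_le_mul_of_mul_lt_one hs.1 (hI_nn ω) hr0.le
        (by simpa [hr0.ne'] using mul_lt_mul_of_pos_left (hf_small hs) hr0) h
  refine setLIntegral_lt_top_iff_of_eqOn_inter measurableSet_Ioc (measurableSet_Iic (a := d))
    (fun s => mul_le_mul' (measure_mono fun _ hω => hω.1) le_rfl)
    (fun s hs => by simp only [hevents s ⟨hs.1.1, hs.2⟩]) ?_
  rw [Ioc_sdiff_Iic, max_eq_right hd.le]
  exact setLIntegral_measure_mul_ofReal_inv_Ioc_lt_top ℙ _ hd l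

/-- If `f` is nondecreasing on `(0,∞)` with `f(s) → 0` as `s → 0+`, then
`∫_0^λ P(s ≤ f(s) I, rs < I) s⁻¹ ds < ∞` iff `∫_0^λ P(s ≤ f(s) I) s⁻¹ ds < ∞`. -/
theorem finiteness_equivalence_at_zero
    {Ω : Type*} [MeasurableSpace Ω] (ℙ : Measure Ω) [IsProbabilityMeasure ℙ]
    (I : Ω → ℝ) (hI : Measurable I) (hI_nn : ∀ ω, 0 ≤ I ω)
    (f : ℝ → ℝ) (hf_nn : ∀ s : ℝ, 0 < s → 0 ≤ f s) (hf_mono : MonotoneOn f (Ioi 0))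
    (hf0 : Tendsto f (nhdsWithin 0 (Ioi 0)) (nhds 0))
    (r : ℝ) (hr : 1 < r) (l : ℝ) (hl : 0 < l) :
    (∫⁻ s in Ioc (0 : ℝ) l,
        ℙ {ω | s ≤ f s * I ω ∧ r * s < I ω} * ENNReal.ofReal s⁻¹ < ⊤) ↔
    (∫⁻ s in Ioc (0 : ℝ) l,
        ℙ {ω | s ≤ f s * I ω} * ENNReal.ofReal s⁻¹ < ⊤) :=
  finiteness_equivalence_at_zero_general ℙ I hI_nn f hf0 r hr l
end

section
/- Let J be a nonnegative real random variable with E[log⁺ J] < ∞, let f : (0,∞) → [0,∞) be Borel measurable, and let r > 1. If ∫_1^∞ P(s < f(s)·J) · s^{−1} ds = ∞, then ∫_1^∞ P(s < f(s)·J and J < r·s) · s^{−1} ds = ∞. -/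
open MeasureTheory Set

/-!
The event `s < f s * J` is covered by the event where also `J < r s` and the tail event
`r s ≤ J`, which lies inside `s ≤ J`. The layer cake formula with weight `t⁻¹` on `(1, ∞)` gives
`∫_1^∞ P(s ≤ J) s⁻¹ ds = E[log⁺ J] < ∞`, so the divergence must come from the first event.
-/

open Real in
theorem integral_indicator_Ioi_one_inv_eq_posLog {x : ℝ} (hx : 0 ≤ x) :
    ∫ t in (0 : ℝ)..x, (Ioi 1).indicator (fun t : ℝ => t⁻¹) t = log⁺ x := by
  have hIoc : Ioc 0 x ∩ Ioi 1 = Ioc 1 (max 1 x) := by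
    ext t
    simp only [mem_inter_iff, mem_Ioc, mem_Ioi, le_max_iff]
    grind
  rw [intervalIntegral.integral_of_le hx, setIntegral_indicator measurableSet_Ioi, hIoc,
    ← intervalIntegral.integral_of_le (le_max_left 1 x),
    integral_inv_of_pos one_pos (lt_max_of_lt_left one_pos), div_one,
    posLog_eq_log_max_one hx]

open Real in
theorem lintegral_posLog_eq_lintegral_meas_le_mul_inv {α : Type*} [MeasurableSpace α]
    (μ : Measure α) {X : α → ℝ} (hX_nn : 0 ≤ᵐ[μ] X) (hX : AEMeasurable X μ) :
    ∫⁻ ω, ENNReal.ofReal (log⁺ (X ω)) ∂μ =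
      ∫⁻ s in Ioi 1, μ {ω | s ≤ X ω} * ENNReal.ofReal s⁻¹ := by
  set g : ℝ → ℝ := (Ioi 1).indicator fun t => t⁻¹
  have hg_le_one : ∀ t, ‖g t‖ ≤ 1 := by
    intro t
    by_cases ht : t ∈ Ioi (1 : ℝ)
    · have ht : (1 : ℝ) < t := ht
      rw [show g t = t⁻¹ from indicator_of_mem ht _, norm_inv, Real.norm_of_nonneg (by linarith)]
      exact inv_le_one_of_one_le₀ ht.le
    · simp [g, indicator_of_notMem ht]
  have hg_int : ∀ t > 0, IntervalIntegrable g volume 0 t := fun _ _ =>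
    (intervalIntegrable_const (c := (1 : ℝ))).mono_fun
      (measurable_inv.indicator measurableSet_Ioi).aestronglyMeasurable
      (ae_of_all _ fun t => (hg_le_one t).trans norm_one.ge)
  have hg_nn : ∀ t, 0 ≤ g t :=
    indicator_nonneg fun t (ht : 1 < t) => inv_nonneg.2 (by linarith)
  have hlayer := lintegral_comp_eq_lintegral_meas_le_mul μ hX_nn hX hg_int (ae_of_all _ hg_nn)
  calc ∫⁻ ω, ENNReal.ofReal (log⁺ (X ω)) ∂μ
      = ∫⁻ ω, ENNReal.ofReal (∫ t in (0 : ℝ)..X ω, g t) ∂μ := by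
        refine lintegral_congr_ae ?_
        filter_upwards [hX_nn] with ω hω
        rw [integral_indicator_Ioi_one_inv_eq_posLog hω]
    _ = ∫⁻ s in Ioi 0, μ {ω | s ≤ X ω} * ENNReal.ofReal (g s) := hlayer
    _ = ∫⁻ s in Ioi 1, μ {ω | s ≤ X ω} * ENNReal.ofReal s⁻¹ := by
        rw [← lintegral_indicator measurableSet_Ioi, ← lintegral_indicator measurableSet_Ioi]
        congr 1
        ext s
        by_cases h1 : s ∈ Ioi (1 : ℝ)
        · have h0 : s ∈ Ioi (0 : ℝ) := mem_Ioi.2 (lt_trans one_pos h1)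
          simp [g, indicator_of_mem h0, indicator_of_mem h1]
        · simp [g, indicator_of_notMem h1]

open Real in
theorem lintegral_meas_mul_le_mul_inv_le_lintegral_posLog {α : Type*} [MeasurableSpace α]
    (μ : Measure α) {X : α → ℝ} (hX_nn : 0 ≤ᵐ[μ] X) (hX : AEMeasurable X μ) {r : ℝ}
    (hr : 1 ≤ r) :
    ∫⁻ s in Ioi 1, μ {ω | r * s ≤ X ω} * ENNReal.ofReal s⁻¹ ≤
      ∫⁻ ω, ENNReal.ofReal (log⁺ (X ω)) ∂μ := by
  rw [lintegral_posLog_eq_lintegral_meas_le_mul_inv μ hX_nn hX]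
  refine setLIntegral_mono' measurableSet_Ioi fun s (hs : 1 < s) => ?_
  refine mul_le_mul_left (measure_mono fun ω (hω : r * s ≤ X ω) => ?_) _
  show s ≤ X ω
  nlinarith

theorem divergence_transfer_at_infinity_general
    {Ω : Type*} [MeasurableSpace Ω] (ℙ : Measure Ω)
    (J : Ω → ℝ) (hJ : Measurable J) (hJ_nn : ∀ ω, 0 ≤ J ω)
    (hlog : ∫⁻ ω, ENNReal.ofReal (max (Real.log (J ω)) 0) ∂ℙ < ⊤)
    (f : ℝ → ℝ)
    (r : ℝ) (hr : 1 < r)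
    (hdiv : ∫⁻ s in Ioi (1 : ℝ), ℙ {ω | s < f s * J ω} * ENNReal.ofReal s⁻¹ = ⊤) :
    ∫⁻ s in Ioi (1 : ℝ),
        ℙ {ω | s < f s * J ω ∧ J ω < r * s} * ENNReal.ofReal s⁻¹ = ⊤ := by
  set tail : ℝ → ENNReal := fun s => ℙ {ω | r * s ≤ J ω} * ENNReal.ofReal s⁻¹
  have htail_meas : Measurable tail := by
    refine Measurable.mul (Antitone.measurable fun s t hst => measure_mono ?_)
      measurable_inv.ennreal_ofReal
    exact fun ω (hω : r * t ≤ J ω) => show r * s ≤ J ω by nlinarith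
  have htail_fin : ∫⁻ s in Ioi 1, tail s ≠ ⊤ := by
    refine ne_top_of_le_ne_top hlog.ne ?_
    simp_rw [max_comm _ (0 : ℝ)]
    exact lintegral_meas_mul_le_mul_inv_le_lintegral_posLog ℙ (ae_of_all _ hJ_nn)
      hJ.aemeasurable hr.le
  have hsplit : ⊤ ≤ (∫⁻ s in Ioi (1 : ℝ),
      ℙ {ω | s < f s * J ω ∧ J ω < r * s} * ENNReal.ofReal s⁻¹) + ∫⁻ s in Ioi 1, tail s := by
    rw [← hdiv, ← lintegral_add_right _ htail_meas]
    refine lintegral_mono fun s => ?_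
    rw [← add_mul]
    refine mul_le_mul_left ?_ _
    refine (measure_mono fun ω hω => ?_).trans (measure_union_le _ _)
    exact (lt_or_ge (J ω) (r * s)).imp (fun h => ⟨hω, h⟩) id
  exact (ENNReal.add_eq_top.1 (top_le_iff.1 hsplit)).resolve_right htail_fin

/-- If `E[log⁺ J] < ∞` and `∫_1^∞ P(s < f(s) J) s⁻¹ ds = ∞`, then
`∫_1^∞ P(s < f(s) J, J < rs) s⁻¹ ds = ∞`. -/
theorem divergence_transfer_at_infinity
    {Ω : Type*} [MeasurableSpace Ω] (ℙ : Measure Ω) [IsProbabilityMeasure ℙ]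
    (J : Ω → ℝ) (hJ : Measurable J) (hJ_nn : ∀ ω, 0 ≤ J ω)
    (hlog : ∫⁻ ω, ENNReal.ofReal (max (Real.log (J ω)) 0) ∂ℙ < ⊤)
    (f : ℝ → ℝ) (hf : Measurable f) (hf_nn : ∀ s : ℝ, 0 < s → 0 ≤ f s)
    (r : ℝ) (hr : 1 < r)
    (hdiv : ∫⁻ s in Ioi (1 : ℝ), ℙ {ω | s < f s * J ω} * ENNReal.ofReal s⁻¹ = ⊤) :
    ∫⁻ s in Ioi (1 : ℝ),
        ℙ {ω | s < f s * J ω ∧ J ω < r * s} * ENNReal.ofReal s⁻¹ = ⊤ :=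
  divergence_transfer_at_infinity_general ℙ J hJ hJ_nn hlog f r hr hdiv
end

section
/- Let I be an almost surely strictly positive real random variable, let f : (0,∞) → [0,∞) be nondecreasing, and let r > 1. Then ∑_{n=1}^∞ P(r^{n+1} ≤ f(r^{n}·I)) ≤ (1/log r) · ∫_0^∞ P(s ≤ f(s)·I and r·I < s) · s^{−1} ds ≤ ∑_{n=1}^∞ P(r^{n} ≤ f(r^{n+1}·I)), as inequalities in [0,+∞]. -/
/-!
Fix `ω` and write `ι = I ω > 0`. The half-line `(r ι, ∞)` is the disjoint union of the blocks
`(r^(n+1) ι, r^(n+2) ι]`, each of mass `log r` for `ds / s`. Since `f` is nondecreasing, the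
constraint `s ≤ f s * ι` holds on the whole `n`-th block when `r^(n+2) ≤ f (r^(n+1) ι)`, and
nowhere on it when `f (r^(n+2) ι) < r^(n+1)`. This sandwiches the `s`-integral between
`log r` times two sums of indicators; integrating in `ω` and exchanging the integrals (Tonelli)
gives the two inequalities.
-/

open MeasureTheory Filter Set
open scoped ENNReal

theorem lintegral_Ioc_ofReal_inv {a b : ℝ} (ha : 0 < a) (hab : a ≤ b) :
    ∫⁻ s in Ioc a b, ENNReal.ofReal s⁻¹ = ENNReal.ofReal (Real.log (b / a)) := by
  have hint : IntegrableOn (fun s : ℝ => s⁻¹) (Ioc a b) :=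
    (intervalIntegrable_inv_iff.2 (Or.inr fun h0 => by
      rw [uIcc_of_le hab] at h0; exact h0.1.not_gt ha)).1
  rw [← ofReal_integral_eq_lintegral_ofReal hint, ← intervalIntegral.integral_of_le hab,
    integral_inv_of_pos ha (ha.trans_le hab)]
  filter_upwards [ae_restrict_mem measurableSet_Ioc] with s hs
  exact inv_nonneg.2 (ha.trans hs.1).le

theorem lintegral_Ioi_eq_tsum_Ioc {α : Type*} [LinearOrder α] [TopologicalSpace α]
    [OrderClosedTopology α] [MeasurableSpace α] [OpensMeasurableSpace α] {μ : Measure α}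
    {b : ℕ → α} (hb : Monotone b) (hb_top : ¬BddAbove (range b)) (F : α → ℝ≥0∞) :
    ∫⁻ x in Ioi (b 0), F x ∂μ = ∑' n, ∫⁻ x in Ioc (b n) (b (n + 1)), F x ∂μ := by
  have hU := iUnion_Ioc_map_succ_eq_Ioi (fun n => hb (Nat.zero_le n)) hb_top
  simp only [Order.succ_eq_add_one, Nat.bot_eq_zero] at hU
  rw [← hU, lintegral_iUnion (fun n => measurableSet_Ioc)]
  simpa only [Order.succ_eq_add_one] using hb.pairwise_disjoint_on_Ioc_succ

theorem lintegral_Ioi_eq_tsum_Ioc_mul_pow {a r : ℝ} (ha : 0 < a) (hr : 1 < r)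
    (F : ℝ → ℝ≥0∞) :
    ∫⁻ x in Ioi a, F x = ∑' n : ℕ, ∫⁻ x in Ioc (a * r ^ n) (a * r ^ (n + 1)), F x := by
  have hb : Monotone fun n : ℕ => a * r ^ n := fun m n hmn =>
    mul_le_mul_of_nonneg_left (pow_le_pow_right₀ hr.le hmn) ha.le
  simpa using lintegral_Ioi_eq_tsum_Ioc hb (not_bddAbove_of_tendsto_atTop
    ((tendsto_pow_atTop_atTop_of_one_lt hr).const_mul_atTop ha)) F

theorem lintegral_tsum_indicator_const {Ω ι : Type*} [Countable ι] [MeasurableSpace Ω]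
    {μ : Measure Ω} {A : ι → Set Ω} (hA : ∀ i, NullMeasurableSet (A i) μ)
    (c : ℝ≥0∞) :
    ∫⁻ ω, ∑' i, (A i).indicator (fun _ => c) ω ∂μ = c * ∑' i, μ (A i) := by
  rw [lintegral_tsum fun i => aemeasurable_const.indicator₀ (hA i), ← ENNReal.tsum_mul_left]
  exact tsum_congr fun i => lintegral_indicator_const₀ (hA i) c

theorem lintegral_measure_setOf_mul_eq_lintegral_lintegral {α β : Type*}
    [MeasurableSpace α] [MeasurableSpace β] {μ : Measure α} {ν : Measure β}
    [SFinite μ] [SFinite ν] {P : α → β → Prop}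
    (hP : NullMeasurableSet {p : α × β | P p.1 p.2} (μ.prod ν))
    (hP_slice : ∀ a, NullMeasurableSet {b | P a b} ν) {g : α → ℝ≥0∞}
    (hg : AEMeasurable g μ) :
    ∫⁻ a, ν {b | P a b} * g a ∂μ = ∫⁻ b, ∫⁻ a, {a | P a b}.indicator g a ∂μ ∂ν := by
  calc ∫⁻ a, ν {b | P a b} * g a ∂μ
      = ∫⁻ a, ∫⁻ b, {b | P a b}.indicator (fun _ => g a) b ∂ν ∂μ :=
        lintegral_congr fun a => by rw [lintegral_indicator_const₀ (hP_slice a), mul_comm]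
    _ = _ := lintegral_lintegral_swap (hg.comp_fst.indicator₀ hP)

theorem MonotoneOn.measurableSet_pos_and_le {f : ℝ → ℝ} (hf : MonotoneOn f (Ioi 0))
    (c : ℝ) :
    MeasurableSet {x | 0 < x ∧ c ≤ f x} :=
  OrdConnected.measurableSet ⟨fun _ hx _ _ _ hz =>
    ⟨hx.1.trans_le hz.1, hx.2.trans (hf hx.1 (hx.1.trans_le hz.1) hz.1)⟩⟩

section Measurability

variable {Ω : Type*} [MeasurableSpace Ω] {μ : Measure Ω} {f : ℝ → ℝ} {I : Ω → ℝ}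

theorem MonotoneOn.nullMeasurableSet_le_comp_mul (hf : MonotoneOn f (Ioi 0)) (hI : Measurable I)
    (hIpos : ∀ᵐ ω ∂μ, 0 < I ω) {a : ℝ} (ha : 0 < a) (c : ℝ) :
    NullMeasurableSet {ω | c ≤ f (a * I ω)} μ := by
  refine ((hI.const_mul a) (hf.measurableSet_pos_and_le c)).nullMeasurableSet.congr ?_
  filter_upwards [hIpos] with ω hω
  exact propext (and_iff_right (mul_pos ha hω))

theorem setLIntegral_measure_mul_inv_eq_lintegral_setLIntegral [SFinite μ]
    (hf : MonotoneOn f (Ioi 0)) (hI : Measurable I) (r : ℝ) :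
    ∫⁻ s in Ioi (0 : ℝ), μ {ω | s ≤ f s * I ω ∧ r * I ω < s} * ENNReal.ofReal s⁻¹ =
      ∫⁻ ω, (∫⁻ s in Ioi (0 : ℝ),
        {s | s ≤ f s * I ω ∧ r * I ω < s}.indicator (fun s => ENNReal.ofReal s⁻¹) s)
        ∂μ := by
  have hI_snd : Measurable fun p : ℝ × Ω => I p.2 := hI.comp measurable_snd
  have hf_fst : AEMeasurable (fun p : ℝ × Ω => f p.1) ((volume.restrict (Ioi 0)).prod μ) :=
    (aemeasurable_restrict_of_monotoneOn measurableSet_Ioi hf).comp_fst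
  have hE : NullMeasurableSet {p : ℝ × Ω | p.1 ≤ f p.1 * I p.2 ∧ r * I p.2 < p.1}
      ((volume.restrict (Ioi 0)).prod μ) :=
    (nullMeasurableSet_le measurable_fst.aemeasurable (hf_fst.mul hI_snd.aemeasurable)).inter
      (nullMeasurableSet_lt (hI_snd.aemeasurable.const_mul r) measurable_fst.aemeasurable)
  have hE_slice (s : ℝ) : NullMeasurableSet {ω | s ≤ f s * I ω ∧ r * I ω < s} μ :=
    ((measurableSet_le measurable_const (hI.const_mul _)).inter
      (measurableSet_lt (hI.const_mul _) measurable_const)).nullMeasurableSet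
  exact lintegral_measure_setOf_mul_eq_lintegral_lintegral hE hE_slice
    (ENNReal.measurable_ofReal.comp measurable_inv).aemeasurable

end Measurability

section Comparison

variable {f : ℝ → ℝ} {ι u v r : ℝ}

theorem setLIntegral_Ioc_indicator_eq_of_le (hf : MonotoneOn f (Ioi 0)) (hι : 0 ≤ ι)
    (hu : 0 < u) (h : v ≤ f u * ι) :
    ∫⁻ s in Ioc u v, {s | s ≤ f s * ι}.indicator (fun s => ENNReal.ofReal s⁻¹) s =
      ∫⁻ s in Ioc u v, ENNReal.ofReal s⁻¹ := by
  refine setLIntegral_congr_fun measurableSet_Ioc fun s hs => indicator_of_mem ?_ _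
  calc s ≤ v := hs.2
    _ ≤ f u * ι := h
    _ ≤ f s * ι := mul_le_mul_of_nonneg_right (hf hu (hu.trans hs.1) hs.1.le) hι

theorem setLIntegral_Ioc_indicator_eq_zero_of_lt (hf : MonotoneOn f (Ioi 0)) (hι : 0 ≤ ι)
    (hu : 0 < u) (h : f v * ι < u) :
    ∫⁻ s in Ioc u v, {s | s ≤ f s * ι}.indicator (fun s => ENNReal.ofReal s⁻¹) s = 0 := by
  have hout : ∀ s ∈ Ioc u v, s ∉ {s | s ≤ f s * ι} := fun s hs hs' => by
    have hs0 : 0 < s := hu.trans hs.1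
    have : f s * ι ≤ f v * ι :=
      mul_le_mul_of_nonneg_right (hf hs0 (hs0.trans_le hs.2) hs.2) hι
    linarith [hs.1, show s ≤ f s * ι from hs']
  rw [setLIntegral_congr_fun measurableSet_Ioc fun s hs => indicator_of_notMem (hout s hs) _,
    lintegral_zero]

theorem lintegral_Ioc_pow_mul_ofReal_inv (hr : 1 < r) (hι : 0 < ι) (n : ℕ) :
    ∫⁻ s in Ioc (r ^ (n + 1) * ι) (r ^ (n + 2) * ι), ENNReal.ofReal s⁻¹ =
      ENNReal.ofReal (Real.log r) := by
  have hr0 : 0 < r := zero_lt_one.trans hr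
  rw [lintegral_Ioc_ofReal_inv (by positivity)
    (mul_le_mul_of_nonneg_right (pow_le_pow_right₀ hr.le (by omega)) hι.le)]
  congr 2
  field_simp
  ring

theorem lintegral_indicator_eq_tsum_Ioc (hr : 1 < r) (hι : 0 < ι) :
    ∫⁻ s in Ioi 0, {s | s ≤ f s * ι ∧ r * ι < s}.indicator (fun s => ENNReal.ofReal s⁻¹) s =
      ∑' n : ℕ, ∫⁻ s in Ioc (r ^ (n + 1) * ι) (r ^ (n + 2) * ι),
        {s | s ≤ f s * ι}.indicator (fun s => ENNReal.ofReal s⁻¹) s := by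
  have hrι : 0 < r * ι := mul_pos (zero_lt_one.trans hr) hι
  have hset : {s | s ≤ f s * ι ∧ r * ι < s} = Ioi (r * ι) ∩ {s | s ≤ f s * ι} := by
    ext s; exact and_comm
  rw [hset, ← indicator_indicator, lintegral_indicator measurableSet_Ioi,
    Measure.restrict_restrict measurableSet_Ioi, inter_eq_left.2 (Ioi_subset_Ioi hrι.le),
    lintegral_Ioi_eq_tsum_Ioc_mul_pow hrι hr]
  refine tsum_congr fun n => ?_
  rw [show r * ι * r ^ n = r ^ (n + 1) * ι by ring,
    show r * ι * r ^ (n + 1) = r ^ (n + 2) * ι by ring]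

theorem tsum_ite_le_lintegral_indicator (hf : MonotoneOn f (Ioi 0)) (hr : 1 < r)
    (hι : 0 < ι) :
    ∑' n : ℕ,
        (if r ^ (n + 2) ≤ f (r ^ (n + 1) * ι) then ENNReal.ofReal (Real.log r) else 0) ≤
      ∫⁻ s in Ioi 0,
        {s | s ≤ f s * ι ∧ r * ι < s}.indicator (fun s => ENNReal.ofReal s⁻¹) s := by
  rw [lintegral_indicator_eq_tsum_Ioc hr hι]
  refine ENNReal.tsum_le_tsum fun n => ?_
  split_ifs with h
  · rw [setLIntegral_Ioc_indicator_eq_of_le hf hι.le (by positivity)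
      (mul_le_mul_of_nonneg_right h hι.le), lintegral_Ioc_pow_mul_ofReal_inv hr hι]
  · exact zero_le

theorem lintegral_indicator_le_tsum_ite (hf : MonotoneOn f (Ioi 0)) (hr : 1 < r)
    (hι : 0 < ι) :
    ∫⁻ s in Ioi 0,
        {s | s ≤ f s * ι ∧ r * ι < s}.indicator (fun s => ENNReal.ofReal s⁻¹) s ≤
      ∑' n : ℕ,
        (if r ^ (n + 1) ≤ f (r ^ (n + 2) * ι) then ENNReal.ofReal (Real.log r) else 0) := by
  have hr0 : 0 < r := zero_lt_one.trans hr
  rw [lintegral_indicator_eq_tsum_Ioc hr hι]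
  refine ENNReal.tsum_le_tsum fun n => ?_
  split_ifs with h
  · rw [← lintegral_Ioc_pow_mul_ofReal_inv hr hι n]
    exact lintegral_mono (indicator_le_self _ _)
  · exact (setLIntegral_Ioc_indicator_eq_zero_of_lt hf hι.le (by positivity)
      (mul_lt_mul_of_pos_right (not_le.1 h) hι)).le

end Comparison

theorem series_integral_comparison_at_infinity_general
    {Ω : Type*} [MeasurableSpace Ω] (ℙ : Measure Ω) [IsProbabilityMeasure ℙ]
    (I : Ω → ℝ) (hI : Measurable I) (hIpos : ∀ᵐ ω ∂ℙ, 0 < I ω)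
    (f : ℝ → ℝ) (hf_mono : MonotoneOn f (Ioi 0))
    (r : ℝ) (hr : 1 < r) :
    (∑' n : ℕ, ℙ {ω | r ^ ((n : ℝ) + 2) ≤ f (r ^ ((n : ℝ) + 1) * I ω)}) ≤
      ENNReal.ofReal (1 / Real.log r) *
        (∫⁻ s in Ioi (0 : ℝ),
          ℙ {ω | s ≤ f s * I ω ∧ r * I ω < s} * ENNReal.ofReal s⁻¹) ∧
    ENNReal.ofReal (1 / Real.log r) *
        (∫⁻ s in Ioi (0 : ℝ),
          ℙ {ω | s ≤ f s * I ω ∧ r * I ω < s} * ENNReal.ofReal s⁻¹) ≤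
      ∑' n : ℕ, ℙ {ω | r ^ ((n : ℝ) + 1) ≤ f (r ^ ((n : ℝ) + 2) * I ω)} := by
  have hr0 : 0 < r := zero_lt_one.trans hr
  have hpow₁ (n : ℕ) : r ^ ((n : ℝ) + 1) = r ^ (n + 1) := by
    exact_mod_cast Real.rpow_natCast r _
  have hpow₂ (n : ℕ) : r ^ ((n : ℝ) + 2) = r ^ (n + 2) := by
    exact_mod_cast Real.rpow_natCast r _
  have hL : ENNReal.ofReal (Real.log r) ≠ 0 := (ENNReal.ofReal_pos.2 (Real.log_pos hr)).ne'
  simp only [hpow₁, hpow₂]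
  rw [one_div, ENNReal.ofReal_inv_of_pos (Real.log_pos hr),
    ← ENNReal.mul_le_iff_le_inv hL ENNReal.ofReal_ne_top,
    ENNReal.inv_mul_le_iff hL ENNReal.ofReal_ne_top]
  rw [setLIntegral_measure_mul_inv_eq_lintegral_setLIntegral hf_mono hI,
    ← lintegral_tsum_indicator_const fun n =>
      hf_mono.nullMeasurableSet_le_comp_mul hI hIpos (pow_pos hr0 (n + 1)) (r ^ (n + 2)),
    ← lintegral_tsum_indicator_const fun n =>
      hf_mono.nullMeasurableSet_le_comp_mul hI hIpos (pow_pos hr0 (n + 2)) (r ^ (n + 1))]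
  constructor <;> refine lintegral_mono_ae ?_ <;> filter_upwards [hIpos] with ω hω
  · simpa only [indicator_apply, mem_ofPred_eq] using
      tsum_ite_le_lintegral_indicator hf_mono hr hω
  · simpa only [indicator_apply, mem_ofPred_eq] using
      lintegral_indicator_le_tsum_ite hf_mono hr hω

/-- Series–integral comparison at `+∞`:
`∑_{n≥1} P(r^{n+1} ≤ f(r^n I)) ≤ (1/log r) ∫_0^∞ P(s ≤ f(s) I, rI < s) s⁻¹ ds
  ≤ ∑_{n≥1} P(r^n ≤ f(r^{n+1} I))`. -/
theorem series_integral_comparison_at_infinity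
    {Ω : Type*} [MeasurableSpace Ω] (ℙ : Measure Ω) [IsProbabilityMeasure ℙ]
    (I : Ω → ℝ) (hI : Measurable I) (hIpos : ∀ᵐ ω ∂ℙ, 0 < I ω)
    (f : ℝ → ℝ) (hf_nn : ∀ s : ℝ, 0 < s → 0 ≤ f s) (hf_mono : MonotoneOn f (Ioi 0))
    (r : ℝ) (hr : 1 < r) :
    (∑' n : ℕ, ℙ {ω | r ^ ((n : ℝ) + 2) ≤ f (r ^ ((n : ℝ) + 1) * I ω)}) ≤
      ENNReal.ofReal (1 / Real.log r) *
        (∫⁻ s in Ioi (0 : ℝ),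
          ℙ {ω | s ≤ f s * I ω ∧ r * I ω < s} * ENNReal.ofReal s⁻¹) ∧
    ENNReal.ofReal (1 / Real.log r) *
        (∫⁻ s in Ioi (0 : ℝ),
          ℙ {ω | s ≤ f s * I ω ∧ r * I ω < s} * ENNReal.ofReal s⁻¹) ≤
      ∑' n : ℕ, ℙ {ω | r ^ ((n : ℝ) + 1) ≤ f (r ^ ((n : ℝ) + 2) * I ω)} :=
  series_integral_comparison_at_infinity_general ℙ I hI hIpos f hf_mono r hr
end

section
/- Let I be a nonnegative real random variable with P(I > t) > 0 for every t > 0 and whose tail is regularly varying of index −γ for some γ > 0 in the ratio sense: for every c > 0, P(I > ct)/P(I > t) → c^{−γ} as t → +∞. Let f : (0,∞) → (0,∞) be Borel measurable with f(s)/s → 0 as s → 0+, and let β > 0 and λ > 0. Then ∫_0^λ P(s/f(s) < I) · s^{−1} ds < ∞ if and only if ∫_0^λ P(β·s/f(s) < I) · s^{−1} ds < ∞. -/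
/-!
The regular variation of the tail `t ↦ ℙ(t < I)` makes `ℙ(c t < I)` at most a constant multiple of
`ℙ(t < I)` for large `t`, for every fixed `c > 0`. Since `s / f s → ∞` as `s → 0+`, the integrands
`ℙ(β s / f s < I) s⁻¹` and `ℙ(s / f s < I) s⁻¹` are therefore comparable near `0` (use `c = β`, and
`c = β⁻¹` applied to `β s / f s`), while on `[δ, λ]` both are bounded by `δ⁻¹`.
-/

open MeasureTheory Filter Set

open scoped ENNReal Topology

lemma ENNReal.exists_eventually_le_mul_of_tendsto_toReal_div {α : Type*} {l : Filter α}
    {u v : α → ℝ≥0∞} {L : ℝ} (hu : ∀ x, u x ≠ ⊤) (hv : ∀ x, v x ≠ ⊤)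
    (hv_pos : ∀ᶠ x in l, v x ≠ 0)
    (h : Tendsto (fun x => (u x).toReal / (v x).toReal) l (𝓝 L)) :
    ∃ K : ℝ≥0∞, K ≠ ⊤ ∧ ∀ᶠ x in l, u x ≤ K * v x := by
  refine ⟨ENNReal.ofReal (L + 1), ENNReal.ofReal_ne_top, ?_⟩
  filter_upwards [h.eventually_le_const (lt_add_one L), hv_pos] with x hx hvx
  have hv_real : 0 < (v x).toReal := ENNReal.toReal_pos hvx (hv x)
  rw [div_le_iff₀ hv_real] at hx
  calc u x = ENNReal.ofReal (u x).toReal := (ENNReal.ofReal_toReal (hu x)).symm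
    _ ≤ ENNReal.ofReal ((L + 1) * (v x).toReal) := ENNReal.ofReal_le_ofReal hx
    _ = ENNReal.ofReal (L + 1) * v x := by
      rw [ENNReal.ofReal_mul' hv_real.le, ENNReal.ofReal_toReal (hv x)]

lemma tendsto_div_atTop_of_tendsto_div_nhdsGT_zero {f : ℝ → ℝ} (hf_pos : ∀ s, 0 < s → 0 < f s)
    (hf0 : Tendsto (fun s => f s / s) (𝓝[>] 0) (𝓝 0)) :
    Tendsto (fun s => s / f s) (𝓝[>] 0) atTop := by
  have hpos : Tendsto (fun s => f s / s) (𝓝[>] 0) (𝓝[>] 0) :=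
    tendsto_nhdsWithin_iff.mpr
      ⟨hf0, eventually_nhdsWithin_of_forall fun s hs => div_pos (hf_pos s hs) hs⟩
  exact hpos.inv_tendsto_nhdsGT_zero.congr fun s => inv_div (f s) s

lemma setLIntegral_Ioc_mul_inv_lt_top_of_eventually_le {F G : ℝ → ℝ≥0∞} {K : ℝ≥0∞} {l : ℝ}
    (hK : K ≠ ⊤) (hG : ∀ s, G s ≤ 1) (hGF : ∀ᶠ s in 𝓝[>] 0, G s ≤ K * F s)
    (hF : ∫⁻ s in Ioc 0 l, F s * ENNReal.ofReal s⁻¹ < ⊤) :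
    ∫⁻ s in Ioc 0 l, G s * ENNReal.ofReal s⁻¹ < ⊤ := by
  obtain ⟨δ, (hδ : 0 < δ), hδGF⟩ := mem_nhdsGT_iff_exists_Ioc_subset.mp hGF
  have hpointwise : ∀ s ∈ Ioc 0 l,
      G s * ENNReal.ofReal s⁻¹ ≤ K * (F s * ENNReal.ofReal s⁻¹) + ENNReal.ofReal δ⁻¹ := by
    intro s hs
    rcases le_or_gt s δ with hsδ | hδs
    · rw [← mul_assoc]
      exact le_add_right (mul_le_mul_left (hδGF ⟨hs.1, hsδ⟩) _)
    · calc G s * ENNReal.ofReal s⁻¹ ≤ 1 * ENNReal.ofReal δ⁻¹ :=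
            mul_le_mul' (hG s) (ENNReal.ofReal_le_ofReal (inv_anti₀ hδ hδs.le))
        _ ≤ _ := by rw [one_mul]; exact le_add_left le_rfl
  calc ∫⁻ s in Ioc 0 l, G s * ENNReal.ofReal s⁻¹
      ≤ ∫⁻ s in Ioc 0 l, K * (F s * ENNReal.ofReal s⁻¹) + ENNReal.ofReal δ⁻¹ :=
        setLIntegral_mono' measurableSet_Ioc hpointwise
    _ = K * (∫⁻ s in Ioc 0 l, F s * ENNReal.ofReal s⁻¹)
          + ENNReal.ofReal δ⁻¹ * volume (Ioc 0 l) := by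
        rw [lintegral_add_right _ measurable_const, lintegral_const_mul' _ _ hK,
          setLIntegral_const]
    _ < ⊤ := ENNReal.add_lt_top.mpr
        ⟨ENNReal.mul_lt_top (lt_top_iff_ne_top.mpr hK) hF,
          ENNReal.mul_lt_top ENNReal.ofReal_lt_top measure_Ioc_lt_top⟩

lemma setLIntegral_prob_const_mul_lt_top {Ω : Type*} [MeasurableSpace Ω] {ℙ : Measure Ω}
    [IsProbabilityMeasure ℙ] {I : Ω → ℝ} (hpos : ∀ t : ℝ, 0 < t → 0 < ℙ {ω | t < I ω})
    {c L : ℝ} (hreg : Tendsto (fun t : ℝ =>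
        (ℙ {ω | c * t < I ω}).toReal / (ℙ {ω | t < I ω}).toReal) atTop (𝓝 L))
    {a : ℝ → ℝ} (ha : Tendsto a (𝓝[>] 0) atTop) {l : ℝ}
    (hfin : ∫⁻ s in Ioc 0 l, ℙ {ω | a s < I ω} * ENNReal.ofReal s⁻¹ < ⊤) :
    ∫⁻ s in Ioc 0 l, ℙ {ω | c * a s < I ω} * ENNReal.ofReal s⁻¹ < ⊤ := by
  obtain ⟨K, hK, hdom⟩ := ENNReal.exists_eventually_le_mul_of_tendsto_toReal_div
    (fun _ => measure_ne_top _ _) (fun _ => measure_ne_top _ _)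
    ((eventually_gt_atTop 0).mono fun t ht => (hpos t ht).ne') hreg
  exact setLIntegral_Ioc_mul_inv_lt_top_of_eventually_le hK (fun _ => prob_le_one)
    (ha.eventually hdom) hfin

theorem regular_case_equivalence_at_zero_general
    {Ω : Type*} [MeasurableSpace Ω] (ℙ : Measure Ω) [IsProbabilityMeasure ℙ]
    (I : Ω → ℝ)
    (hpos : ∀ t : ℝ, 0 < t → 0 < ℙ {ω | t < I ω})
    (γ : ℝ)
    (hreg : ∀ c : ℝ, 0 < c → Tendsto (fun t : ℝ =>
        (ℙ {ω | c * t < I ω}).toReal / (ℙ {ω | t < I ω}).toReal) atTop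
        (nhds (c ^ (-γ))))
    (f : ℝ → ℝ) (hf_pos : ∀ s : ℝ, 0 < s → 0 < f s)
    (hf0 : Tendsto (fun s => f s / s) (nhdsWithin 0 (Ioi 0)) (nhds 0))
    (β : ℝ) (hβ : 0 < β) (l : ℝ) :
    (∫⁻ s in Ioc (0 : ℝ) l,
        ℙ {ω | s / f s < I ω} * ENNReal.ofReal s⁻¹ < ⊤) ↔
    (∫⁻ s in Ioc (0 : ℝ) l,
        ℙ {ω | β * s / f s < I ω} * ENNReal.ofReal s⁻¹ < ⊤) := by
  have hratio : Tendsto (fun s => s / f s) (𝓝[>] 0) atTop :=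
    tendsto_div_atTop_of_tendsto_div_nhdsGT_zero hf_pos hf0
  have hscaled : ∀ s, β * s / f s = β * (s / f s) := fun s => mul_div_assoc β s (f s)
  have hunscaled : ∀ s, β⁻¹ * (β * (s / f s)) = s / f s := fun s => inv_mul_cancel_left₀ hβ.ne' _
  simp only [hscaled]
  constructor
  · exact setLIntegral_prob_const_mul_lt_top hpos (hreg β hβ) hratio
  · intro h
    simpa only [hunscaled] using setLIntegral_prob_const_mul_lt_top hpos
      (hreg β⁻¹ (inv_pos.mpr hβ)) (hratio.const_mul_atTop hβ) h

/-- In the regular case, for `f` with `f(s)/s → 0` as `s → 0+` and any `β > 0`,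
`∫_0^λ P(s/f(s) < I) s⁻¹ ds < ∞` iff `∫_0^λ P(βs/f(s) < I) s⁻¹ ds < ∞`. -/
theorem regular_case_equivalence_at_zero
    {Ω : Type*} [MeasurableSpace Ω] (ℙ : Measure Ω) [IsProbabilityMeasure ℙ]
    (I : Ω → ℝ) (hI : Measurable I) (hI_nn : ∀ ω, 0 ≤ I ω)
    (hpos : ∀ t : ℝ, 0 < t → 0 < ℙ {ω | t < I ω})
    (γ : ℝ) (hγ : 0 < γ)
    (hreg : ∀ c : ℝ, 0 < c → Tendsto (fun t : ℝ =>
        (ℙ {ω | c * t < I ω}).toReal / (ℙ {ω | t < I ω}).toReal) atTop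
        (nhds (c ^ (-γ))))
    (f : ℝ → ℝ) (hf : Measurable f) (hf_pos : ∀ s : ℝ, 0 < s → 0 < f s)
    (hf0 : Tendsto (fun s => f s / s) (nhdsWithin 0 (Ioi 0)) (nhds 0))
    (β : ℝ) (hβ : 0 < β) (l : ℝ) (hl : 0 < l) :
    (∫⁻ s in Ioc (0 : ℝ) l,
        ℙ {ω | s / f s < I ω} * ENNReal.ofReal s⁻¹ < ⊤) ↔
    (∫⁻ s in Ioc (0 : ℝ) l,
        ℙ {ω | β * s / f s < I ω} * ENNReal.ofReal s⁻¹ < ⊤) :=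
  regular_case_equivalence_at_zero_general ℙ I hpos γ hreg f hf_pos hf0 β hβ l
end

section
/- Let I be a nonnegative real random variable with P(I > t) > 0 for every t > 0 and whose tail is regularly varying of index −γ for some γ > 0 in the ratio sense: for every c > 0, P(I > ct)/P(I > t) → c^{−γ} as t → +∞. Let f : (0,∞) → (0,∞) be Borel measurable with f(t)/t → 0 as t → +∞, and let β > 0 and λ > 0. Then ∫_λ^∞ P(s/f(s) < I) · s^{−1} ds < ∞ if and only if ∫_λ^∞ P(β·s/f(s) < I) · s^{−1} ds < ∞. -/
/-!
Since `f(s)/s → 0`, the threshold `u(s) = s / f(s)` tends to `+∞`. Regular variation makes the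
ratio `P(I > c t) / P(I > t)` converge to the finite limit `c^(-γ)`, so for large `t` the tail at
`c t` is at most a constant times the tail at `t`. Hence the integrand with threshold `c u(s)` is
eventually dominated by a constant multiple of the one with threshold `u(s)`, while on the
bounded part `(λ, T]` both integrands are at most `s⁻¹ ≤ λ⁻¹`. Taking `c = β` and `c = β⁻¹`
gives the two implications.
-/

open MeasureTheory Filter Set

open scoped ENNReal Topology

theorem exists_eventually_le_const_mul_of_tendsto_toReal_div {α : Type*} {l : Filter α}
    {F G : α → ℝ≥0∞} {L : ℝ} (hG : ∀ᶠ t in l, G t ≠ ⊤) (hF : ∀ᶠ t in l, F t ≠ 0 ∧ F t ≠ ⊤)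
    (hlim : Tendsto (fun t => (G t).toReal / (F t).toReal) l (𝓝 L)) :
    ∃ K : ℝ≥0∞, K ≠ ⊤ ∧ ∀ᶠ t in l, G t ≤ K * F t := by
  refine ⟨ENNReal.ofReal (L + 1), ENNReal.ofReal_ne_top, ?_⟩
  filter_upwards [hlim.eventually_lt_const (lt_add_one L), hG, hF] with t hlt hGt ⟨hF0, hFtop⟩
  have hFpos : 0 < (F t).toReal := ENNReal.toReal_pos hF0 hFtop
  have hL : 0 ≤ L + 1 := (div_nonneg ENNReal.toReal_nonneg hFpos.le).trans hlt.le
  rw [← ENNReal.ofReal_toReal hGt, ← ENNReal.ofReal_toReal hFtop, ← ENNReal.ofReal_mul hL]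
  exact ENNReal.ofReal_le_ofReal ((div_lt_iff₀ hFpos).mp hlt).le

theorem setLIntegral_Ioc_ofReal_inv_lt_top {l : ℝ} (hl : 0 < l) (T : ℝ) :
    ∫⁻ s in Ioc l T, ENNReal.ofReal s⁻¹ < ⊤ := by
  calc ∫⁻ s in Ioc l T, ENNReal.ofReal s⁻¹ ≤ ∫⁻ _ in Ioc l T, ENNReal.ofReal l⁻¹ :=
        setLIntegral_mono' measurableSet_Ioc fun s hs =>
          ENNReal.ofReal_le_ofReal (inv_anti₀ hl hs.1.le)
    _ < ⊤ := by
        rw [setLIntegral_const]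
        exact ENNReal.mul_lt_top ENNReal.ofReal_lt_top (by simp)

theorem setLIntegral_Ioi_mul_lt_top_of_eventually_le {g h w : ℝ → ℝ≥0∞} {K : ℝ≥0∞} {l : ℝ}
    (hK : K ≠ ⊤) (hg : ∀ s, g s ≤ 1) (hw : ∀ T, ∫⁻ s in Ioc l T, w s < ⊤)
    (hgh : ∀ᶠ s in atTop, g s ≤ K * h s) (hh : ∫⁻ s in Ioi l, h s * w s < ⊤) :
    ∫⁻ s in Ioi l, g s * w s < ⊤ := by
  obtain ⟨S, hS⟩ := eventually_atTop.mp hgh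
  set T := max S l
  have hhead : ∫⁻ s in Ioc l T, g s * w s < ⊤ :=
    (setLIntegral_mono' measurableSet_Ioc fun s _ =>
      (mul_le_mul_left (hg s) _).trans_eq (one_mul _)).trans_lt (hw T)
  have htail : ∫⁻ s in Ioi T, g s * w s < ⊤ := by
    calc ∫⁻ s in Ioi T, g s * w s ≤ ∫⁻ s in Ioi T, K * (h s * w s) :=
          setLIntegral_mono' measurableSet_Ioi fun s hs => by
            rw [← mul_assoc]
            exact mul_le_mul_left (hS s ((le_max_left _ _).trans hs.le)) _
      _ = K * ∫⁻ s in Ioi T, h s * w s := lintegral_const_mul' _ _ hK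
      _ ≤ K * ∫⁻ s in Ioi l, h s * w s :=
          mul_le_mul_right (lintegral_mono_set (Ioi_subset_Ioi (le_max_right _ _))) _
      _ < ⊤ := ENNReal.mul_lt_top hK.lt_top hh
  rw [← Ioc_union_Ioi_eq_Ioi (le_max_right S l)]
  exact (lintegral_union_le _ _ _).trans_lt (ENNReal.add_lt_top.mpr ⟨hhead, htail⟩)

theorem tendsto_div_atTop_of_tendsto_div_zero {f : ℝ → ℝ} (hf_pos : ∀ s, 0 < s → 0 < f s)
    (hf0 : Tendsto (fun t => f t / t) atTop (𝓝 0)) :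
    Tendsto (fun s => s / f s) atTop atTop := by
  have hf0' : Tendsto (fun t => f t / t) atTop (𝓝[>] 0) :=
    tendsto_nhdsWithin_of_tendsto_nhds_of_eventually_within _ hf0 <| by
      filter_upwards [eventually_gt_atTop 0] with s hs using div_pos (hf_pos s hs) hs
  exact hf0'.inv_tendsto_nhdsGT_zero.congr fun s => inv_div _ _

theorem setLIntegral_tail_const_mul_lt_top {Ω : Type*} [MeasurableSpace Ω] {ℙ : Measure Ω}
    [IsProbabilityMeasure ℙ] {I : Ω → ℝ} {c L l : ℝ} {u : ℝ → ℝ} (hl : 0 < l)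
    (hpos : ∀ᶠ t in atTop, ℙ {ω | t < I ω} ≠ 0)
    (hreg : Tendsto (fun t : ℝ =>
      (ℙ {ω | c * t < I ω}).toReal / (ℙ {ω | t < I ω}).toReal) atTop (𝓝 L))
    (hu : Tendsto u atTop atTop)
    (hfin : ∫⁻ s in Ioi l, ℙ {ω | u s < I ω} * ENNReal.ofReal s⁻¹ < ⊤) :
    ∫⁻ s in Ioi l, ℙ {ω | c * u s < I ω} * ENNReal.ofReal s⁻¹ < ⊤ := by
  obtain ⟨K, hK, hle⟩ := exists_eventually_le_const_mul_of_tendsto_toReal_div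
    (.of_forall fun _ => measure_ne_top ℙ _)
    (hpos.mono fun _ ht => ⟨ht, measure_ne_top ℙ _⟩) hreg
  exact setLIntegral_Ioi_mul_lt_top_of_eventually_le hK (fun _ => prob_le_one)
    (setLIntegral_Ioc_ofReal_inv_lt_top hl) (hu.eventually hle) hfin

theorem regular_case_equivalence_at_infinity_general
    {Ω : Type*} [MeasurableSpace Ω] (ℙ : Measure Ω) [IsProbabilityMeasure ℙ]
    (I : Ω → ℝ)
    (hpos : ∀ t : ℝ, 0 < t → 0 < ℙ {ω | t < I ω})
    (γ : ℝ)
    (hreg : ∀ c : ℝ, 0 < c → Tendsto (fun t : ℝ =>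
        (ℙ {ω | c * t < I ω}).toReal / (ℙ {ω | t < I ω}).toReal) atTop
        (nhds (c ^ (-γ))))
    (f : ℝ → ℝ) (hf_pos : ∀ s : ℝ, 0 < s → 0 < f s)
    (hf0 : Tendsto (fun t => f t / t) atTop (nhds 0))
    (β : ℝ) (hβ : 0 < β) (l : ℝ) (hl : 0 < l) :
    (∫⁻ s in Ioi l, ℙ {ω | s / f s < I ω} * ENNReal.ofReal s⁻¹ < ⊤) ↔
    (∫⁻ s in Ioi l, ℙ {ω | β * s / f s < I ω} * ENNReal.ofReal s⁻¹ < ⊤) := by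
  have htail_pos : ∀ᶠ t in atTop, ℙ {ω | t < I ω} ≠ 0 := by
    filter_upwards [eventually_gt_atTop 0] with t ht using (hpos t ht).ne'
  have hu := tendsto_div_atTop_of_tendsto_div_zero hf_pos hf0
  simp only [mul_div_assoc]
  refine ⟨setLIntegral_tail_const_mul_lt_top hl htail_pos (hreg β hβ) hu, fun h => ?_⟩
  simpa only [inv_mul_cancel_left₀ hβ.ne'] using setLIntegral_tail_const_mul_lt_top hl
    htail_pos (hreg β⁻¹ (inv_pos.mpr hβ)) (hu.const_mul_atTop hβ) h

/-- In the regular case, for `f` with `f(t)/t → 0` as `t → +∞` and any `β > 0`,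
`∫_λ^∞ P(s/f(s) < I) s⁻¹ ds < ∞` iff `∫_λ^∞ P(βs/f(s) < I) s⁻¹ ds < ∞`. -/
theorem regular_case_equivalence_at_infinity
    {Ω : Type*} [MeasurableSpace Ω] (ℙ : Measure Ω) [IsProbabilityMeasure ℙ]
    (I : Ω → ℝ) (hI : Measurable I) (hI_nn : ∀ ω, 0 ≤ I ω)
    (hpos : ∀ t : ℝ, 0 < t → 0 < ℙ {ω | t < I ω})
    (γ : ℝ) (hγ : 0 < γ)
    (hreg : ∀ c : ℝ, 0 < c → Tendsto (fun t : ℝ =>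
        (ℙ {ω | c * t < I ω}).toReal / (ℙ {ω | t < I ω}).toReal) atTop
        (nhds (c ^ (-γ))))
    (f : ℝ → ℝ) (hf : Measurable f) (hf_pos : ∀ s : ℝ, 0 < s → 0 < f s)
    (hf0 : Tendsto (fun t => f t / t) atTop (nhds 0))
    (β : ℝ) (hβ : 0 < β) (l : ℝ) (hl : 0 < l) :
    (∫⁻ s in Ioi l, ℙ {ω | s / f s < I ω} * ENNReal.ofReal s⁻¹ < ⊤) ↔
    (∫⁻ s in Ioi l, ℙ {ω | β * s / f s < I ω} * ENNReal.ofReal s⁻¹ < ⊤) :=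
  regular_case_equivalence_at_infinity_general ℙ I hpos γ hreg f hf_pos hf0 β hβ l hl
end
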